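/- arXiv:2508.15731 — 9 statements merged into one kernel-verified Lean document; each statement's English description precedes it below -/
import Mathlib

section
/- For functions π : A → B and ρ : X → Y between types, π ⧄ ρ (π has the left lifting property against ρ) holds if and only if (Nonempty A ∧ IsEmpty X) or ((π is injective ∨ ρ is injective) ∧ (π is surjective ∨ ρ is surjective)). -/
universe u

open CategoryTheory

/-- **Characterization of lifting in `Type u`.** For functions `π : A → B` and
`ρ : X → Y` (viewed as morphisms in the category of types), `π` has the left
lifting property against `ρ` if and only if (`A` is nonempty and `X` is empty),
or (at least one of `π, ρ` is injective and at least one of `π, ρ` is surjective). -/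
theorem set_llp_iff {A B X Y : Type u} (π : A ⟶ B) (ρ : X ⟶ Y) :
    HasLiftingProperty π ρ ↔
      (Nonempty A ∧ IsEmpty X) ∨
        ((Function.Injective π ∨ Function.Injective ρ) ∧
          (Function.Surjective π ∨ Function.Surjective ρ)) := by
  classical
  constructor
  · intro h
    by_cases hAX : Nonempty A ∧ IsEmpty X
    · exact Or.inl hAX
    right
    constructor
    · by_contra hc
      push_neg at hc
      obtain ⟨hπ, hρ⟩ := hc
      rw [Function.not_injective_iff] at hπ hρ
      obtain ⟨a₁, a₂, hπa, ha⟩ := hπ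
      obtain ⟨x₁, x₂, hρx, hx⟩ := hρ
      let g : A ⟶ X := TypeCat.ofHom fun a => if a = a₁ then x₁ else x₂
      let f : B ⟶ Y := TypeCat.ofHom fun _ => ρ x₁
      have sq : CommSq g π ρ f := ⟨ConcreteCategory.hom_ext _ _ fun a => by
        by_cases ha' : a = a₁ <;> simp [g, f, ha', types_comp_apply, hρx]⟩
      obtain ⟨⟨⟨l, h1, h2⟩⟩⟩ := h.sq_hasLift sq
      have e1 : l (π a₁) = x₁ := by
        have := types_congr_hom h1 a₁
        simpa [g, types_comp_apply] using this
      have e2 : l (π a₂) = x₂ := by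
        have := types_congr_hom h1 a₂
        simpa [g, types_comp_apply, (Ne.symm ha)] using this
      exact hx (e1 ▸ e2 ▸ (congrArg l hπa))
    · by_contra hc
      push_neg at hc
      obtain ⟨hπ, hρ⟩ := hc
      simp only [Function.Surjective, not_forall, not_exists] at hπ hρ
      obtain ⟨b₀, hb₀⟩ := hπ
      obtain ⟨y₀, hy₀⟩ := hρ
      by_cases hX : Nonempty X
      · obtain ⟨x₀⟩ := hX
        let g : A ⟶ X := TypeCat.ofHom fun _ => x₀
        let f : B ⟶ Y := TypeCat.ofHom fun b => if ∃ a, π a = b then ρ x₀ else y₀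
        have sq : CommSq g π ρ f := ⟨ConcreteCategory.hom_ext _ _ fun a => by
          simp only [types_comp_apply, g, f, TypeCat.ofHom_apply]
          rw [if_pos ⟨a, rfl⟩]⟩
        obtain ⟨⟨⟨l, h1, h2⟩⟩⟩ := h.sq_hasLift sq
        have e : ρ (l b₀) = y₀ := by
          have := types_congr_hom h2 b₀
          simp only [types_comp_apply, f, TypeCat.ofHom_apply] at this
          rw [if_neg] at this
          · exact this
          · rintro ⟨a, rfl⟩
            exact hb₀ a rfl
        exact hy₀ (l b₀) e
      · have hXe : IsEmpty X := not_nonempty_iff.mp hX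
        have hA : ¬ Nonempty A := fun hA => hAX ⟨hA, hXe⟩
        have hAe : IsEmpty A := not_nonempty_iff.mp hA
        let g : A ⟶ X := TypeCat.ofHom fun a => isEmptyElim a
        let f : B ⟶ Y := TypeCat.ofHom fun _ => y₀
        have sq : CommSq g π ρ f := ⟨ConcreteCategory.hom_ext _ _ fun a => isEmptyElim a⟩
        obtain ⟨⟨⟨l, h1, h2⟩⟩⟩ := h.sq_hasLift sq
        exact isEmptyElim (l b₀)
  · rintro (⟨⟨a⟩, hX⟩ | ⟨hinj, hsurj⟩)
    · constructor
      intro f g sq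
      exact (hX.false (f a)).elim
    · rcases hinj with hiπ | hiρ <;> rcases hsurj with hsπ | hsρ
      · haveI : IsIso π := (isIso_iff_bijective π).2 ⟨hiπ, hsπ⟩
        infer_instance
      · -- π injective, ρ surjective
        constructor
        intro f g sq
        refine CommSq.HasLift.mk' ⟨TypeCat.ofHom fun b =>
          if h : ∃ a, π a = b then f h.choose else (hsρ (g b)).choose, ?_, ?_⟩
        · refine ConcreteCategory.hom_ext _ _ fun a => ?_
          have hex : ∃ a', π a' = π a := ⟨a, rfl⟩
          simp only [types_comp_apply, TypeCat.ofHom_apply, dif_pos hex]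
          exact congrArg f (hiπ hex.choose_spec)
        · refine ConcreteCategory.hom_ext _ _ fun b => ?_
          by_cases hb : ∃ a, π a = b
          · simp only [types_comp_apply, TypeCat.ofHom_apply, dif_pos hb]
            have := types_congr_hom sq.w hb.choose
            simp only [types_comp_apply] at this
            rw [this, hb.choose_spec]
          · simp only [types_comp_apply, TypeCat.ofHom_apply, dif_neg hb]
            exact (hsρ (g b)).choose_spec
      · -- ρ injective, π surjective
        constructor
        intro f g sq
        refine CommSq.HasLift.mk' ⟨TypeCat.ofHom fun b => f (hsπ b).choose, ?_, ?_⟩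
        · refine ConcreteCategory.hom_ext _ _ fun a => ?_
          simp only [types_comp_apply, TypeCat.ofHom_apply]
          apply hiρ
          have h1 := types_congr_hom sq.w (hsπ (π a)).choose
          have h2 := types_congr_hom sq.w a
          simp only [types_comp_apply] at h1 h2
          rw [h1, h2, (hsπ (π a)).choose_spec]
        · refine ConcreteCategory.hom_ext _ _ fun b => ?_
          simp only [types_comp_apply, TypeCat.ofHom_apply]
          have := types_congr_hom sq.w (hsπ b).choose
          simp only [types_comp_apply] at this
          rw [this, (hsπ b).choose_spec]
      · haveI : IsIso ρ := (isIso_iff_bijective ρ).2 ⟨hiρ, hsρ⟩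
        infer_instance
end

section
/- Let π : A → B be a function between types that is neither injective nor surjective. Then: (i) a function ρ : X → Y satisfies π ⧄ ρ if and only if ρ is bijective or X is empty; and (ii) a function σ : S → T satisfies σ ⧄ ρ for every function ρ : X → Y with (ρ bijective or X empty) if and only if S is nonempty or T is empty. -/
universe u

open CategoryTheory

/-- Let `π : A → B` be neither injective nor surjective. Then (i) `π ⧄ ρ` iff `ρ` is
bijective or its domain `X` is empty; and (ii) a function `σ : S → T` has the LLP
against every `ρ : X → Y` with (`ρ` bijective or `X` empty) iff `S` is nonempty or
`T` is empty. -/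
theorem set_llp_generic {A B : Type u} (π : A ⟶ B)
    (hninj : ¬ Function.Injective π) (hnsurj : ¬ Function.Surjective π) :
    (∀ {X Y : Type u} (ρ : X ⟶ Y),
        HasLiftingProperty π ρ ↔ (Function.Bijective ρ ∨ IsEmpty X)) ∧
      (∀ {S T : Type u} (σ : S ⟶ T),
        (∀ {X Y : Type u} (ρ : X ⟶ Y), (Function.Bijective ρ ∨ IsEmpty X) →
            HasLiftingProperty σ ρ) ↔
          (Nonempty S ∨ IsEmpty T)) := by
  classical
  obtain ⟨a₁, a₂, hπa, hne⟩ := Function.not_injective_iff.1 hninj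
  obtain ⟨b₀, hb₀⟩ : ∃ b : B, ∀ a : A, π a ≠ b := by
    rw [Function.Surjective] at hnsurj; push_neg at hnsurj; exact hnsurj
  constructor
  · intro X Y ρ
    constructor
    · intro h
      by_cases hX : IsEmpty X
      · exact Or.inr hX
      · left
        obtain ⟨x₀⟩ := not_isEmpty_iff.1 hX
        constructor
        · -- injective
          intro x₁ x₂ hx
          have sq : CommSq (TypeCat.ofHom (fun a => if a = a₁ then x₁ else x₂) : A ⟶ X) π ρ
              (TypeCat.ofHom (fun _ => ρ x₁) : B ⟶ Y) := ⟨by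
            ext a
            by_cases ha : a = a₁ <;> simp [ha, hx]⟩
          haveI := h
          have h1 : sq.lift (π a₁) = x₁ := by
            have := ConcreteCategory.congr_hom sq.fac_left a₁
            simp only [types_comp_apply, TypeCat.ofHom_apply] at this
            simpa using this
          have h2 : sq.lift (π a₂) = x₂ := by
            have := ConcreteCategory.congr_hom sq.fac_left a₂
            simp only [types_comp_apply, TypeCat.ofHom_apply] at this
            simpa [Ne.symm hne] using this
          rw [hπa, h2] at h1
          exact h1.symm
        · -- surjective
          intro y
          have sq : CommSq (TypeCat.ofHom (fun _ => x₀) : A ⟶ X) π ρ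
              (TypeCat.ofHom (fun b => if ∃ a, π a = b then ρ x₀ else y) : B ⟶ Y) := ⟨by
            ext a
            simp⟩
          haveI := h
          refine ⟨sq.lift b₀, ?_⟩
          have := ConcreteCategory.congr_hom sq.fac_right b₀
          simp only [types_comp_apply, TypeCat.ofHom_apply] at this
          rw [this, if_neg]
          rintro ⟨a, ha⟩
          exact hb₀ a ha
    · rintro (hbij | hX)
      · haveI : IsIso ρ := (isIso_iff_bijective ρ).2 hbij
        infer_instance
      · exact ⟨fun {f g} sq => (hX.false (f a₁)).elim⟩
  · intro S T σ
    constructor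
    · intro h
      by_cases hS : Nonempty S
      · exact Or.inl hS
      · refine Or.inr ⟨fun t => ?_⟩
        have hPE : IsEmpty PEmpty.{u+1} := inferInstance
        haveI := h (TypeCat.ofHom (fun x : PEmpty.{u+1} => (PEmpty.elim x : PUnit.{u+1}))) (Or.inr hPE)
        have sq : CommSq (TypeCat.ofHom (fun s => ((hS ⟨s⟩).elim : PEmpty.{u+1})) : S ⟶ PEmpty.{u+1}) σ
            (TypeCat.ofHom (fun x : PEmpty.{u+1} => (PEmpty.elim x : PUnit.{u+1})))
            (TypeCat.ofHom (fun _ => PUnit.unit) : T ⟶ PUnit.{u+1}) := ⟨by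
          ext s⟩
        exact (sq.lift t).elim
    · rintro hST X Y ρ hρ
      rcases hST with hS | hT
      · obtain ⟨s₀⟩ := hS
        rcases hρ with hbij | hX
        · haveI : IsIso ρ := (isIso_iff_bijective ρ).2 hbij
          infer_instance
        · exact ⟨fun {f g} sq => (hX.false (f s₀)).elim⟩
      · have hS : IsEmpty S := ⟨fun s => hT.false (σ s)⟩
        refine ⟨fun {f g} sq => ⟨⟨⟨TypeCat.ofHom (fun t => (hT.false t).elim), ?_, ?_⟩⟩⟩⟩
        · ext s; exact (hS.false s).elim
        · ext t; exact (hT.false t).elim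
end

section
/- There are precisely six weak factorization systems on the category of types: a pair (L, R) of classes of functions is a weak factorization system if and only if it equals one of the following six pairs: (1) (bijections, all functions); (2) ({f : A → B | f injective and (A nonempty or B empty)}, {f : A → B | f surjective or A empty}); (3) (surjections, injections); (4) (injections, surjections); (5) ({f : A → B | A nonempty or B empty}, {f : A → B | f bijective or A empty}); (6) (all functions, bijections). -/
universe u

open CategoryTheory

/-- A pair `(L, R)` of classes of morphisms is a weak factorization system:
every morphism factors as a member of `R` after a member of `L`, `L` is exactly the
class of morphisms with the LLP against every member of `R`, and `R` is exactly the
class of morphisms with the RLP against every member of `L`. -/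
def IsWFS {C : Type*} [Category C] (L R : MorphismProperty C) : Prop :=
  (∀ {A B : C} (f : A ⟶ B), ∃ (E : C) (l : A ⟶ E) (r : E ⟶ B), L l ∧ R r ∧ l ≫ r = f) ∧
    (∀ {A B : C} (l : A ⟶ B), L l ↔ ∀ {X Y : C} (r : X ⟶ Y), R r → HasLiftingProperty l r) ∧
    (∀ {X Y : C} (r : X ⟶ Y), R r ↔ ∀ {A B : C} (l : A ⟶ B), L l → HasLiftingProperty l r)

namespace SetWFS

open Function Classical

/-- Concrete formulation of the lifting property for functions. -/
def Lifts {A B X Y : Type u} (i : A → B) (p : X → Y) : Prop :=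
  ∀ (f : A → X) (g : B → Y), p ∘ f = g ∘ i → ∃ l : B → X, l ∘ i = f ∧ p ∘ l = g

lemma hlp_iff {A B X Y : Type u} (i : A → B) (p : X → Y) :
    HasLiftingProperty (C := Type u) (TypeCat.ofHom i) (TypeCat.ofHom p) ↔ Lifts i p := by
  constructor
  · intro h f g w
    have sq : CommSq (C := Type u) (TypeCat.ofHom f) (TypeCat.ofHom i) (TypeCat.ofHom p)
        (TypeCat.ofHom g) := ⟨by ext a; exact congrFun w a⟩
    obtain ⟨⟨l, h1, h2⟩⟩ := (h.sq_hasLift sq).exists_lift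
    exact ⟨l, by funext a; exact types_congr_hom h1 a, by funext b; exact types_congr_hom h2 b⟩
  · intro h
    constructor
    intro f g sq
    obtain ⟨l, h1, h2⟩ := h f g (by funext a; exact types_congr_hom sq.w a)
    exact ⟨⟨TypeCat.ofHom l, by ext a; exact congrFun h1 a, by ext b; exact congrFun h2 b⟩⟩

/-! ### Basic lifting constructions -/

lemma lifts_of_bij_left {A B X Y : Type u} {i : A → B} (hi : Bijective i) (p : X → Y) :
    Lifts i p := by
  intro f g w
  obtain ⟨j, hj1, hj2⟩ := bijective_iff_has_inverse.1 hi
  refine ⟨f ∘ j, ?_, ?_⟩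
  · funext a; simp [hj1 a]
  · funext b; calc p (f (j b)) = g (i (j b)) := congrFun w (j b)
      _ = g b := by rw [hj2 b]

lemma lifts_of_bij_right {A B X Y : Type u} (i : A → B) {p : X → Y} (hp : Bijective p) :
    Lifts i p := by
  intro f g w
  obtain ⟨q, hq1, hq2⟩ := bijective_iff_has_inverse.1 hp
  refine ⟨q ∘ g, ?_, ?_⟩
  · funext a
    have : q (p (f a)) = q (g (i a)) := congrArg q (congrFun w a)
    simpa [hq1 (f a)] using this.symm
  · funext b; simp [hq2 (g b)]

lemma lifts_inj_surj {A B X Y : Type u} {i : A → B} {p : X → Y}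
    (hi : Injective i) (hp : Surjective p) : Lifts i p := by
  intro f g w
  refine ⟨fun b => if h : ∃ a, i a = b then f h.choose else (hp (g b)).choose, ?_, ?_⟩
  · funext a
    have h : ∃ a', i a' = i a := ⟨a, rfl⟩
    show dite _ _ _ = _
    rw [dif_pos h]
    exact congrArg f (hi h.choose_spec)
  · funext b
    show p (dite _ _ _) = _
    by_cases h : ∃ a, i a = b
    · rw [dif_pos h]
      calc p (f h.choose) = g (i h.choose) := congrFun w _
        _ = g b := by rw [h.choose_spec]
    · rw [dif_neg h]
      exact (hp (g b)).choose_spec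

lemma lifts_surj_inj {A B X Y : Type u} {i : A → B} {p : X → Y}
    (hi : Surjective i) (hp : Injective p) : Lifts i p := by
  intro f g w
  refine ⟨fun b => f (hi b).choose, ?_, ?_⟩
  · funext a
    apply hp
    calc p (f (hi (i a)).choose) = g (i ((hi (i a)).choose)) := congrFun w _
      _ = g (i a) := by rw [(hi (i a)).choose_spec]
      _ = p (f a) := (congrFun w a).symm
  · funext b
    calc p (f (hi b).choose) = g (i ((hi b).choose)) := congrFun w _
      _ = g b := by rw [(hi b).choose_spec]

lemma lifts_of_empty {A B X Y : Type u} {i : A → B} (p : X → Y)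
    (h : Nonempty A ∨ IsEmpty B) (hX : IsEmpty X) : Lifts i p := by
  intro f g _
  rcases h with hA | hB
  · exact (hX.false (f hA.some)).elim
  · exact ⟨fun b => (hB.false b).elim, funext fun a => (hX.false (f a)).elim,
      funext fun b => (hB.false b).elim⟩

/-! ### Test maps -/

def σm : ULift.{u} Bool → PUnit.{u+1} := fun _ => PUnit.unit
def δm : PUnit.{u+1} → ULift.{u} Bool := fun _ => ULift.up true
def ιm : PEmpty.{u+1} → PUnit.{u+1} := fun x => x.elim

lemma σm_surj : Surjective σm := fun _ => ⟨ULift.up true, rfl⟩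
lemma δm_inj : Function.Injective δm := fun _ _ _ => rfl
lemma ιm_inj : Function.Injective ιm := fun x _ _ => x.elim

lemma lifts_sigma_iff {X Y : Type u} (p : X → Y) : Lifts σm p ↔ Injective p := by
  constructor
  · intro h x₁ x₂ hx
    obtain ⟨m, h1, h2⟩ := h (fun b => if b.down then x₁ else x₂) (fun _ => p x₁)
      (by funext b; rcases b with ⟨_ | _⟩ <;> simp [hx])
    have e1 : m PUnit.unit = x₁ := by simpa using congrFun h1 (ULift.up true)
    have e2 : m PUnit.unit = x₂ := by simpa using congrFun h1 (ULift.up false)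
    rw [← e1, e2]
  · intro hp f g w
    refine ⟨fun _ => f (ULift.up true), ?_, ?_⟩
    · funext b
      exact hp ((congrFun w (ULift.up true)).trans (congrFun w b).symm)
    · funext b
      exact congrFun w (ULift.up true)

lemma lifts_delta_iff {X Y : Type u} (p : X → Y) :
    Lifts δm p ↔ (Surjective p ∨ IsEmpty X) := by
  constructor
  · intro h
    by_cases hX : Nonempty X
    · left
      intro y
      obtain ⟨m, _, h2⟩ := h (fun _ => hX.some) (fun b => if b.down then p hX.some else y)
        (by funext b; simp [δm])
      refine ⟨m (ULift.up false), ?_⟩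
      simpa using congrFun h2 (ULift.up false)
    · exact Or.inr (not_nonempty_iff.1 hX)
  · rintro (hp | hX)
    · exact lifts_inj_surj δm_inj hp
    · exact lifts_of_empty p (Or.inl ⟨PUnit.unit⟩) hX

lemma lifts_iota_iff {X Y : Type u} (p : X → Y) : Lifts ιm p ↔ Surjective p := by
  constructor
  · intro h y
    obtain ⟨m, _, h2⟩ := h (fun x => x.elim) (fun _ => y) (by funext x; exact x.elim)
    exact ⟨m PUnit.unit, congrFun h2 PUnit.unit⟩
  · intro hp f g w
    refine ⟨fun b => (hp (g b)).choose, by funext x; exact x.elim,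
      funext fun b => (hp (g b)).choose_spec⟩

lemma lifts_iff_inj {A B : Type u} (l : A → B) : Lifts l σm ↔ Injective l := by
  constructor
  · intro h a₁ a₂ ha
    obtain ⟨m, h1, _⟩ := h (fun a => ULift.up (decide (a = a₁))) (fun _ => PUnit.unit)
      (by funext a; rfl)
    have e1 : m (l a₁) = ULift.up true := by simpa using congrFun h1 a₁
    have e2 : m (l a₂) = ULift.up (decide (a₂ = a₁)) := congrFun h1 a₂
    rw [ha, e2] at e1
    have : decide (a₂ = a₁) = true := congrArg ULift.down e1
    exact (of_decide_eq_true this).symm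
  · intro hl f g w
    obtain ⟨m, h1, h2⟩ := lifts_inj_surj hl σm_surj f g w
    exact ⟨m, h1, h2⟩

lemma lifts_iff_surj {A B : Type u} (l : A → B) : Lifts l δm ↔ Surjective l := by
  constructor
  · intro h b₀
    obtain ⟨m, _, h2⟩ := h (fun _ => PUnit.unit)
      (fun b => ULift.up (decide (∃ a, l a = b)))
      (by funext a; simp [δm])
    have := congrFun h2 b₀
    have : decide (∃ a, l a = b₀) = true := congrArg ULift.down this.symm
    exact of_decide_eq_true this
  · intro hl
    exact lifts_surj_inj hl δm_inj

lemma lifts_iff_ne {A B : Type u} (l : A → B) :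
    Lifts l ιm ↔ (Nonempty A ∨ IsEmpty B) := by
  constructor
  · intro h
    by_cases hA : Nonempty A
    · exact Or.inl hA
    · have hA' := not_nonempty_iff.1 hA
      obtain ⟨m, _, _⟩ := h (fun a => (hA'.false a).elim) (fun _ => PUnit.unit)
        (by funext a; exact (hA'.false a).elim)
      exact Or.inr ⟨fun b => (m b).elim⟩
  · intro h f g _
    rcases h with hA | hB
    · exact ((f hA.some).elim)
    · exact ⟨fun b => (hB.false b).elim, funext fun a => (f a).elim,
        funext fun b => (hB.false b).elim⟩

/-! ### Detection lemmas -/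

lemma inj_of_lifts {A B X Y : Type u} {p : X → Y} {x₁ x₂ : X} (hx : p x₁ = p x₂)
    (hne : x₁ ≠ x₂) {l : A → B} (h : Lifts l p) : Injective l := by
  intro a₁ a₂ ha
  obtain ⟨m, h1, _⟩ := h (fun a => if a = a₁ then x₁ else x₂) (fun _ => p x₁)
    (by funext a; by_cases hc : a = a₁ <;> simp [hc, hx.symm])
  by_contra hne'
  have e1 : m (l a₁) = x₁ := by simpa using congrFun h1 a₁
  have e2 : m (l a₂) = x₂ := by
    have h3 : m (l a₂) = if a₂ = a₁ then x₁ else x₂ := congrFun h1 a₂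
    rwa [if_neg (fun h' : a₂ = a₁ => hne' h'.symm)] at h3
  rw [ha, e2] at e1
  exact hne e1.symm

lemma surj_of_lifts {A B X Y : Type u} {p : X → Y} (x₀ : X) {y₀ : Y}
    (hy : ∀ x, p x ≠ y₀) {l : A → B} (h : Lifts l p) : Surjective l := by
  intro b₀
  obtain ⟨m, _, h2⟩ := h (fun _ => x₀)
    (fun b => if ∃ a, l a = b then p x₀ else y₀)
    (by funext a; exact (if_pos ⟨a, rfl⟩).symm)
  by_contra hb
  have := congrFun h2 b₀
  rw [if_neg (by simpa using hb)] at this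
  exact hy _ this

lemma ne_of_lifts {A B X Y : Type u} {p : X → Y} (hX : IsEmpty X) (hY : Nonempty Y)
    {l : A → B} (h : Lifts l p) : Nonempty A ∨ IsEmpty B := by
  by_cases hA : Nonempty A
  · exact Or.inl hA
  · have hA' := not_nonempty_iff.1 hA
    obtain ⟨m, _, _⟩ := h (fun a => (hA'.false a).elim) (fun _ => hY.some)
      (by funext a; exact (hA'.false a).elim)
    exact Or.inr ⟨fun b => (hX.false (m b)).elim⟩

/-! ### Reformulation of `IsWFS` in terms of `Lifts` -/

lemma isWFS_iff (L R : MorphismProperty (Type u)) :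
    IsWFS L R ↔
      ((∀ {A B : Type u} (f : A → B),
          ∃ (E : Type u) (l : A → E) (r : E → B), L (TypeCat.ofHom l) ∧ R (TypeCat.ofHom r) ∧ r ∘ l = f) ∧
       (∀ {A B : Type u} (l : A → B),
          L (TypeCat.ofHom l) ↔ ∀ {X Y : Type u} (r : X → Y), R (TypeCat.ofHom r) → Lifts l r) ∧
       (∀ {X Y : Type u} (r : X → Y),
          R (TypeCat.ofHom r) ↔ ∀ {A B : Type u} (l : A → B), L (TypeCat.ofHom l) → Lifts l r)) := by
  constructor
  · rintro ⟨h1, h2, h3⟩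
    refine ⟨?_, ?_, ?_⟩
    · intro A B f
      obtain ⟨E, l, r, hl, hr, hc⟩ := h1 (TypeCat.ofHom f)
      exact ⟨E, l, r, hl, hr, by funext a; exact types_congr_hom hc a⟩
    · intro A B l
      rw [h2 (TypeCat.ofHom l)]
      constructor
      · intro h X Y r hr; exact (hlp_iff l r).1 (h (TypeCat.ofHom r) hr)
      · intro h X Y r hr; exact (hlp_iff l r).2 (h r hr)
    · intro X Y r
      rw [h3 (TypeCat.ofHom r)]
      constructor
      · intro h A B l hl; exact (hlp_iff l r).1 (h (TypeCat.ofHom l) hl)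
      · intro h A B l hl; exact (hlp_iff l r).2 (h l hl)
  · rintro ⟨h1, h2, h3⟩
    refine ⟨?_, ?_, ?_⟩
    · intro A B f
      obtain ⟨E, l, r, hl, hr, hc⟩ := h1 f
      exact ⟨E, TypeCat.ofHom l, TypeCat.ofHom r, hl, hr, by ext a; exact congrFun hc a⟩
    · intro A B l
      refine (h2 l).trans ?_
      constructor
      · intro h X Y r hr; exact (hlp_iff l r).2 (h r hr)
      · intro h X Y r hr; exact (hlp_iff l r).1 (h (TypeCat.ofHom r) hr)
    · intro X Y r
      refine (h3 r).trans ?_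
      constructor
      · intro h A B l hl; exact (hlp_iff l r).2 (h l hl)
      · intro h A B l hl; exact (hlp_iff l r).1 (h (TypeCat.ofHom l) hl)

lemma MP_ext {L M : MorphismProperty (Type u)}
    (h : ∀ (A B : Type u) (f : A → B), L (TypeCat.ofHom f) ↔ M (TypeCat.ofHom f)) : L = M := by
  funext A B f
  exact propext (h A B f)

/-! ### The six weak factorization systems -/

lemma isWFS₁ : IsWFS (C := Type u) (fun _ _ f => Function.Bijective f) (fun _ _ _ => True) := by
  refine (isWFS_iff _ _).2 ?_
  refine ⟨?_, ?_, ?_⟩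
  · intro A B f
    exact ⟨A, id, f, Function.bijective_id, trivial, rfl⟩
  · intro A B l
    constructor
    · intro hl X Y r _
      exact lifts_of_bij_left hl r
    · intro h
      obtain ⟨m, h1, h2⟩ := h l trivial id id rfl
      exact bijective_iff_has_inverse.2
        ⟨m, fun a => congrFun h1 a, fun b => congrFun h2 b⟩
  · intro X Y r
    constructor
    · intro _ A B l hl
      exact lifts_of_bij_left hl r
    · intro _; trivial

lemma isWFS₆ : IsWFS (C := Type u) (fun _ _ _ => True) (fun _ _ f => Function.Bijective f) := by
  refine (isWFS_iff _ _).2 ?_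
  refine ⟨?_, ?_, ?_⟩
  · intro A B f
    exact ⟨B, f, id, trivial, Function.bijective_id, rfl⟩
  · intro A B l
    constructor
    · intro _ X Y r hr
      exact lifts_of_bij_right l hr
    · intro _; trivial
  · intro X Y r
    constructor
    · intro hr A B l _
      exact lifts_of_bij_right l hr
    · intro h
      obtain ⟨m, h1, h2⟩ := h r trivial id id rfl
      exact bijective_iff_has_inverse.2
        ⟨m, fun a => congrFun h1 a, fun b => congrFun h2 b⟩

lemma isWFS₃ : IsWFS (C := Type u) (fun _ _ f => Function.Surjective f)
    (fun _ _ f => Function.Injective f) := by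
  refine (isWFS_iff _ _).2 ?_
  refine ⟨?_, ?_, ?_⟩
  · intro A B f
    refine ⟨{b // ∃ a, f a = b}, fun a => ⟨f a, a, rfl⟩, Subtype.val, ?_, Subtype.val_injective, rfl⟩
    rintro ⟨b, a, ha⟩
    exact ⟨a, Subtype.ext ha⟩
  · intro A B l
    constructor
    · intro hl X Y r hr
      exact lifts_surj_inj hl hr
    · intro h
      exact (lifts_iff_surj l).1 (h δm δm_inj)
  · intro X Y r
    constructor
    · intro hr A B l hl
      exact lifts_surj_inj hl hr
    · intro h
      exact (lifts_sigma_iff r).1 (h σm σm_surj)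

lemma isWFS₄ : IsWFS (C := Type u) (fun _ _ f => Function.Injective f)
    (fun _ _ f => Function.Surjective f) := by
  refine (isWFS_iff _ _).2 ?_
  refine ⟨?_, ?_, ?_⟩
  · intro A B f
    exact ⟨A ⊕ B, Sum.inl, Sum.elim f id, Sum.inl_injective,
      fun b => ⟨Sum.inr b, rfl⟩, rfl⟩
  · intro A B l
    constructor
    · intro hl X Y r hr
      exact lifts_inj_surj hl hr
    · intro h
      exact (lifts_iff_inj l).1 (h σm σm_surj)
  · intro X Y r
    constructor
    · intro hr A B l hl
      exact lifts_inj_surj hl hr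
    · intro h
      exact (lifts_iota_iff r).1 (h ιm ιm_inj)

lemma isWFS₂ : IsWFS (C := Type u)
    (fun A B f => Function.Injective f ∧ (Nonempty A ∨ IsEmpty B))
    (fun A _ f => Function.Surjective f ∨ IsEmpty A) := by
  refine (isWFS_iff _ _).2 ?_
  refine ⟨?_, ?_, ?_⟩
  · intro A B f
    by_cases hA : Nonempty A
    · exact ⟨A ⊕ B, Sum.inl, Sum.elim f id, ⟨Sum.inl_injective, Or.inl hA⟩,
        Or.inl (fun b => ⟨Sum.inr b, rfl⟩), rfl⟩
    · exact ⟨A, id, f, ⟨Function.injective_id, Or.inr (not_nonempty_iff.1 hA)⟩,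
        Or.inr (not_nonempty_iff.1 hA), rfl⟩
  · intro A B l
    constructor
    · rintro ⟨hinj, hne⟩ X Y r hr
      rcases hr with hs | hX
      · exact lifts_inj_surj hinj hs
      · exact lifts_of_empty r hne hX
    · intro h
      refine ⟨(lifts_iff_inj l).1 (h σm (Or.inl σm_surj)), ?_⟩
      exact (lifts_iff_ne l).1 (h ιm (Or.inr inferInstance))
  · intro X Y r
    constructor
    · rintro (hs | hX) A B l ⟨hinj, hne⟩
      · exact lifts_inj_surj hinj hs
      · exact lifts_of_empty r hne hX
    · intro h
      by_cases hX : Nonempty X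
      · left
        rcases (lifts_delta_iff r).1 (h δm ⟨δm_inj, Or.inl ⟨PUnit.unit⟩⟩) with hs | hx
        · exact hs
        · exact (hx.false hX.some).elim
      · exact Or.inr (not_nonempty_iff.1 hX)

lemma isWFS₅ : IsWFS (C := Type u)
    (fun A B _ => Nonempty A ∨ IsEmpty B)
    (fun A _ f => Function.Bijective f ∨ IsEmpty A) := by
  refine (isWFS_iff _ _).2 ?_
  refine ⟨?_, ?_, ?_⟩
  · intro A B f
    by_cases hA : Nonempty A
    · exact ⟨B, f, id, Or.inl hA, Or.inl Function.bijective_id, rfl⟩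
    · exact ⟨A, id, f, Or.inr (not_nonempty_iff.1 hA), Or.inr (not_nonempty_iff.1 hA), rfl⟩
  · intro A B l
    constructor
    · intro hne X Y r hr
      rcases hr with hb | hX
      · exact lifts_of_bij_right l hb
      · exact lifts_of_empty r hne hX
    · intro h
      exact (lifts_iff_ne l).1 (h ιm (Or.inr inferInstance))
  · intro X Y r
    constructor
    · rintro (hb | hX) A B l hne
      · exact lifts_of_bij_right l hb
      · exact lifts_of_empty r hne hX
    · intro h
      by_cases hX : Nonempty X
      · left
        refine ⟨(lifts_sigma_iff r).1 (h σm (Or.inl ⟨ULift.up true⟩)), ?_⟩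
        rcases (lifts_delta_iff r).1 (h δm (Or.inl ⟨PUnit.unit⟩)) with hs | hx
        · exact hs
        · exact (hx.false hX.some).elim
      · exact Or.inr (not_nonempty_iff.1 hX)

end SetWFS

open SetWFS Function Classical in
/-- **The six weak factorization systems on the category of sets.** -/
theorem set_wfs_classification (L R : MorphismProperty (Type u)) :
    IsWFS L R ↔
      ((L = (fun (A B : Type u) (f : A ⟶ B) => Function.Bijective ⇑f) ∧ R = (fun _ _ _ => True)) ∨
       (L = (fun (A B : Type u) (f : A ⟶ B) => Function.Injective ⇑f ∧ (Nonempty A ∨ IsEmpty B)) ∧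
          R = (fun (A B : Type u) (f : A ⟶ B) => Function.Surjective ⇑f ∨ IsEmpty A)) ∨
       (L = (fun (A B : Type u) (f : A ⟶ B) => Function.Surjective ⇑f) ∧ R = (fun (A B : Type u) (f : A ⟶ B) => Function.Injective ⇑f)) ∨
       (L = (fun (A B : Type u) (f : A ⟶ B) => Function.Injective ⇑f) ∧ R = (fun (A B : Type u) (f : A ⟶ B) => Function.Surjective ⇑f)) ∨
       (L = (fun A B _ => Nonempty A ∨ IsEmpty B) ∧
          R = (fun (A B : Type u) (f : A ⟶ B) => Function.Bijective ⇑f ∨ IsEmpty A)) ∨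
       (L = (fun _ _ _ => True) ∧ R = (fun (A B : Type u) (f : A ⟶ B) => Function.Bijective ⇑f))) := by
  constructor
  · intro h
    rw [isWFS_iff] at h
    obtain ⟨-, hL, hR⟩ := h
    -- all bijections are in L and in R
    have bijL : ∀ {A B : Type u} (f : A → B), Bijective f → L (TypeCat.ofHom f) := by
      intro A B f hf
      exact (hL f).2 (fun r _ => lifts_of_bij_left hf r)
    have bijR : ∀ {X Y : Type u} (f : X → Y), Bijective f → R (TypeCat.ofHom f) := by
      intro X Y f hf
      exact (hR f).2 (fun l _ => lifts_of_bij_right l hf)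
    -- from non-membership of a test map in L, produce a witness in R
    have not_all : ∀ {A0 B0 : Type u} (l0 : A0 → B0), ¬ L (TypeCat.ofHom l0) →
        ∃ (X Y : Type u) (r : X → Y), R (TypeCat.ofHom r) ∧ ¬ Lifts l0 r := by
      intro A0 B0 l0 hn
      by_contra hc
      push_neg at hc
      exact hn ((hL l0).2 (fun {X Y} r hr => hc X Y r hr))
    by_cases hσ : L (TypeCat.ofHom σm.{u}) <;> by_cases hδ : L (TypeCat.ofHom δm.{u})
    · -- σ ∈ L, δ ∈ L : cases 5 and 6
      have Rinj : ∀ {X Y : Type u} (r : X → Y), R (TypeCat.ofHom r) → Injective r := by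
        intro X Y r hr
        exact (lifts_sigma_iff r).1 ((hL σm).1 hσ r hr)
      have Rδ : ∀ {X Y : Type u} (r : X → Y), R (TypeCat.ofHom r) → (Surjective r ∨ IsEmpty X) := by
        intro X Y r hr
        exact (lifts_delta_iff r).1 ((hL δm).1 hδ r hr)
      by_cases hι : L (TypeCat.ofHom ιm.{u})
      · -- case 6 : (all, bij)
        have Rsurj : ∀ {X Y : Type u} (r : X → Y), R (TypeCat.ofHom r) → Surjective r := by
          intro X Y r hr
          exact (lifts_iota_iff r).1 ((hL ιm).1 hι r hr)
        have hRbij : R = (fun (A B : Type u) (f : A ⟶ B) => Function.Bijective ⇑f) := by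
          apply MP_ext
          intro X Y r
          exact ⟨fun hr => ⟨Rinj r hr, Rsurj r hr⟩, fun hb => bijR r hb⟩
        refine Or.inr (Or.inr (Or.inr (Or.inr (Or.inr ⟨?_, hRbij⟩))))
        apply MP_ext
        intro A B l
        refine ⟨fun _ => trivial, fun _ => ?_⟩
        exact (hL l).2 (fun r hr => lifts_of_bij_right l ⟨Rinj r hr, Rsurj r hr⟩)
      · -- case 5
        obtain ⟨X₀, Y₀, r₀, hr₀, hnl₀⟩ := not_all ιm hι
        have hns₀ : ¬ Surjective r₀ := fun hs => hnl₀ ((lifts_iota_iff r₀).2 hs)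
        have hX₀ : IsEmpty X₀ := by
          rcases Rδ r₀ hr₀ with hs | hx
          · exact (hns₀ hs).elim
          · exact hx
        have hY₀ : Nonempty Y₀ := by
          by_contra h
          exact hns₀ fun y => ((not_nonempty_iff.1 h).false y).elim
        have Lne : ∀ {A B : Type u} (l : A → B), L (TypeCat.ofHom l) → (Nonempty A ∨ IsEmpty B) := by
          intro A B l hl
          exact ne_of_lifts hX₀ hY₀ ((hL l).1 hl r₀ hr₀)
        have RR : ∀ {X Y : Type u} (r : X → Y), R (TypeCat.ofHom r) → (Bijective r ∨ IsEmpty X) := by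
          intro X Y r hr
          rcases Rδ r hr with hs | hx
          · exact Or.inl ⟨Rinj r hr, hs⟩
          · exact Or.inr hx
        refine Or.inr (Or.inr (Or.inr (Or.inr (Or.inl ⟨?_, ?_⟩))))
        · apply MP_ext
          intro A B l
          refine ⟨fun hl => Lne l hl, fun hne => (hL l).2 (fun r hr => ?_)⟩
          rcases RR r hr with hb | hx
          · exact lifts_of_bij_right l hb
          · exact lifts_of_empty r hne hx
        · apply MP_ext
          intro X Y r
          refine ⟨fun hr => RR r hr, fun hr => (hR r).2 (fun l hl => ?_)⟩
          rcases hr with hb | hx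
          · exact lifts_of_bij_right l hb
          · exact lifts_of_empty r (Lne l hl) hx
    · -- σ ∈ L, δ ∉ L : case 3 (surjections, injections)
      have Rinj : ∀ {X Y : Type u} (r : X → Y), R (TypeCat.ofHom r) → Injective r := by
        intro X Y r hr
        exact (lifts_sigma_iff r).1 ((hL σm).1 hσ r hr)
      obtain ⟨X₀, Y₀, r₀, hr₀, hnl₀⟩ := not_all δm hδ
      have hns : ¬ (Surjective r₀ ∨ IsEmpty X₀) := fun hh => hnl₀ ((lifts_delta_iff r₀).2 hh)
      push_neg at hns
      obtain ⟨hns₀, hnx₀⟩ := hns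
      have hX₀ : Nonempty X₀ := hnx₀
      obtain ⟨y₀, hy₀⟩ : ∃ y, ∀ x, r₀ x ≠ y := by
        by_contra h
        push_neg at h
        exact hns₀ fun y => h y
      have Lsurj : ∀ {A B : Type u} (l : A → B), L (TypeCat.ofHom l) → Surjective l := by
        intro A B l hl
        exact surj_of_lifts hX₀.some hy₀ ((hL l).1 hl r₀ hr₀)
      refine Or.inr (Or.inr (Or.inl ⟨?_, ?_⟩))
      · apply MP_ext
        intro A B l
        exact ⟨fun hl => Lsurj l hl,
          fun hs => (hL l).2 (fun r hr => lifts_surj_inj hs (Rinj r hr))⟩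
      · apply MP_ext
        intro X Y r
        exact ⟨fun hr => Rinj r hr,
          fun hinj => (hR r).2 (fun l hl => lifts_surj_inj (Lsurj l hl) hinj)⟩
    · -- σ ∉ L, δ ∈ L : cases 4 and 2
      obtain ⟨Xs, Ys, rs, hrs, hnls⟩ := not_all σm hσ
      have hni : ¬ Injective rs := fun hi => hnls ((lifts_sigma_iff rs).2 hi)
      obtain ⟨x₁, x₂, hx, hxe⟩ := Function.not_injective_iff.1 hni
      have Linj : ∀ {A B : Type u} (l : A → B), L (TypeCat.ofHom l) → Injective l := by
        intro A B l hl
        exact inj_of_lifts hx hxe ((hL l).1 hl rs hrs)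
      have Rδ : ∀ {X Y : Type u} (r : X → Y), R (TypeCat.ofHom r) → (Surjective r ∨ IsEmpty X) := by
        intro X Y r hr
        exact (lifts_delta_iff r).1 ((hL δm).1 hδ r hr)
      by_cases hι : L (TypeCat.ofHom ιm.{u})
      · -- case 4 : (injections, surjections)
        have Rsurj : ∀ {X Y : Type u} (r : X → Y), R (TypeCat.ofHom r) → Surjective r := by
          intro X Y r hr
          exact (lifts_iota_iff r).1 ((hL ιm).1 hι r hr)
        refine Or.inr (Or.inr (Or.inr (Or.inl ⟨?_, ?_⟩)))
        · apply MP_ext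
          intro A B l
          exact ⟨fun hl => Linj l hl,
            fun hinj => (hL l).2 (fun r hr => lifts_inj_surj hinj (Rsurj r hr))⟩
        · apply MP_ext
          intro X Y r
          exact ⟨fun hr => Rsurj r hr,
            fun hs => (hR r).2 (fun l hl => lifts_inj_surj (Linj l hl) hs)⟩
      · -- case 2
        obtain ⟨X₀, Y₀, r₀, hr₀, hnl₀⟩ := not_all ιm hι
        have hns₀ : ¬ Surjective r₀ := fun hs => hnl₀ ((lifts_iota_iff r₀).2 hs)
        have hX₀ : IsEmpty X₀ := by
          rcases Rδ r₀ hr₀ with hs | hx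
          · exact (hns₀ hs).elim
          · exact hx
        have hY₀ : Nonempty Y₀ := by
          by_contra h
          exact hns₀ fun y => ((not_nonempty_iff.1 h).false y).elim
        have Lne : ∀ {A B : Type u} (l : A → B), L (TypeCat.ofHom l) → (Nonempty A ∨ IsEmpty B) := by
          intro A B l hl
          exact ne_of_lifts hX₀ hY₀ ((hL l).1 hl r₀ hr₀)
        refine Or.inr (Or.inl ⟨?_, ?_⟩)
        · apply MP_ext
          intro A B l
          refine ⟨fun hl => ⟨Linj l hl, Lne l hl⟩,
            fun hli => (hL l).2 (fun r hr => ?_)⟩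
          rcases Rδ r hr with hs | hxe'
          · exact lifts_inj_surj hli.1 hs
          · exact lifts_of_empty r hli.2 hxe'
        · apply MP_ext
          intro X Y r
          refine ⟨fun hr => Rδ r hr, fun hrp => (hR r).2 (fun l hl => ?_)⟩
          rcases hrp with hs | hxe'
          · exact lifts_inj_surj (Linj l hl) hs
          · exact lifts_of_empty r (Lne l hl) hxe'
    · -- σ ∉ L, δ ∉ L : case 1 (bijections, everything)
      obtain ⟨Xs, Ys, rs, hrs, hnls⟩ := not_all σm hσ
      have hni : ¬ Injective rs := fun hi => hnls ((lifts_sigma_iff rs).2 hi)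
      obtain ⟨x₁, x₂, hx, hxe⟩ := Function.not_injective_iff.1 hni
      have Linj : ∀ {A B : Type u} (l : A → B), L (TypeCat.ofHom l) → Injective l := by
        intro A B l hl
        exact inj_of_lifts hx hxe ((hL l).1 hl rs hrs)
      obtain ⟨X₀, Y₀, r₀, hr₀, hnl₀⟩ := not_all δm hδ
      have hns : ¬ (Surjective r₀ ∨ IsEmpty X₀) := fun hh => hnl₀ ((lifts_delta_iff r₀).2 hh)
      push_neg at hns
      obtain ⟨hns₀, hnx₀⟩ := hns
      have hX₀ : Nonempty X₀ := hnx₀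
      obtain ⟨y₀, hy₀⟩ : ∃ y, ∀ x, r₀ x ≠ y := by
        by_contra h
        push_neg at h
        exact hns₀ fun y => h y
      have Lsurj : ∀ {A B : Type u} (l : A → B), L (TypeCat.ofHom l) → Surjective l := by
        intro A B l hl
        exact surj_of_lifts hX₀.some hy₀ ((hL l).1 hl r₀ hr₀)
      refine Or.inl ⟨?_, ?_⟩
      · apply MP_ext
        intro A B l
        exact ⟨fun hl => ⟨Linj l hl, Lsurj l hl⟩, fun hb => bijL l hb⟩
      · apply MP_ext
        intro X Y r
        exact ⟨fun _ => trivial,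
          fun _ => (hR r).2 (fun l hl => lifts_of_bij_left ⟨Linj l hl, Lsurj l hl⟩ r)⟩
  · rintro (⟨hL, hR⟩ | ⟨hL, hR⟩ | ⟨hL, hR⟩ | ⟨hL, hR⟩ | ⟨hL, hR⟩ | ⟨hL, hR⟩) <;> subst hL <;> subst hR
    · exact isWFS₁
    · exact isWFS₂
    · exact isWFS₃
    · exact isWFS₄
    · exact isWFS₅
    · exact isWFS₆
end

section
/- The triple (C, F, W) on the category of types given by C = injections, F = {f : A → B | f surjective or A empty}, W = {f : A → B | A nonempty or B empty} is a model structure: W satisfies the 2-out-of-3 property and both (C ∩ W, F) and (C, F ∩ W) are weak factorization systems. -/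
universe u

open CategoryTheory

/-- The 2-out-of-3 property for a class of morphisms. -/
def TwoOutOfThree {C : Type*} [Category C] (W : MorphismProperty C) : Prop :=
  ∀ {A B D : C} (f : A ⟶ B) (g : B ⟶ D),
    (W f → W g → W (f ≫ g)) ∧ (W f → W (f ≫ g) → W g) ∧ (W g → W (f ≫ g) → W f)

/-- The intersection of two classes of morphisms. -/
def interMP {C : Type*} [Category C] (P Q : MorphismProperty C) : MorphismProperty C :=
  fun _ _ f => P f ∧ Q f

/-- A model structure. -/
def IsModelStructure {𝒞 : Type*} [Category 𝒞] (C F W : MorphismProperty 𝒞) : Prop :=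
  TwoOutOfThree W ∧ IsWFS (interMP C W) F ∧ IsWFS C (interMP F W)


section Helpers

variable {A B X Y : Type u}

/-- Lift when the right map is surjective and the left map is injective. -/
lemma lift_of_surj (l : A ⟶ B) (r : X ⟶ Y) (hl : Function.Injective l)
    (hr : Function.Surjective r) : HasLiftingProperty l r := by
  constructor
  intro f g sq
  classical
  constructor
  refine ⟨⟨TypeCat.ofHom (fun b => if h : ∃ a, l a = b then f h.choose else (hr (g b)).choose), ?_, ?_⟩⟩
  · refine ConcreteCategory.hom_ext _ _ (fun a => ?_)
    have h : ∃ a', l a' = l a := ⟨a, rfl⟩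
    simp only [types_comp_apply, TypeCat.ofHom_apply, dif_pos h]
    exact congrArg f (hl h.choose_spec)
  · refine ConcreteCategory.hom_ext _ _ (fun b => ?_)
    by_cases h : ∃ a, l a = b
    · simp only [types_comp_apply, TypeCat.ofHom_apply, dif_pos h]
      have := ConcreteCategory.congr_hom sq.w h.choose
      simp only [types_comp_apply] at this
      rw [this, h.choose_spec]
    · simp only [types_comp_apply, TypeCat.ofHom_apply, dif_neg h]
      exact (hr (g b)).choose_spec

/-- Lift when the codomain of the left map is empty. -/
lemma lift_of_empty_B (l : A ⟶ B) (r : X ⟶ Y) [IsEmpty B] : HasLiftingProperty l r := by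
  constructor
  intro f g sq
  exact ⟨⟨⟨TypeCat.ofHom (fun b => isEmptyElim b), by ext a; exact isEmptyElim (l a), by ext b; exact isEmptyElim b⟩⟩⟩

/-- Lift when the codomain of the right map is empty. -/
lemma lift_of_empty_Y (l : A ⟶ B) (r : X ⟶ Y) [IsEmpty Y] : HasLiftingProperty l r := by
  constructor
  intro f g sq
  exact ⟨⟨⟨TypeCat.ofHom (fun b => isEmptyElim (g b)), by ext a; exact isEmptyElim (g (l a)),
    by ext b; exact isEmptyElim (g b)⟩⟩⟩

/-- Lift when the domain of the right map is empty, given the W-condition on the left map. -/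
lemma lift_of_empty_X (l : A ⟶ B) (r : X ⟶ Y) [IsEmpty X]
    (hW : Nonempty A ∨ IsEmpty B) : HasLiftingProperty l r := by
  rcases hW with h | h
  · constructor
    intro f g sq
    exact isEmptyElim (f h.some)
  · exact lift_of_empty_B l r

/-- If l lifts against `Sum.elim l id`, then l is injective. -/
lemma inj_of_lift (l : A ⟶ B) (h : HasLiftingProperty l (TypeCat.ofHom (Sum.elim l id) : A ⊕ B ⟶ B)) :
    Function.Injective l := by
  have sq : CommSq (TypeCat.ofHom Sum.inl : A ⟶ A ⊕ B) l (TypeCat.ofHom (Sum.elim l id) : A ⊕ B ⟶ B) (𝟙 B) := ⟨rfl⟩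
  obtain ⟨lift, hfl, _⟩ := (h.sq_hasLift sq).exists_lift.some
  intro a a' haa'
  have h1 := ConcreteCategory.congr_hom hfl a
  have h2 := ConcreteCategory.congr_hom hfl a'
  simp only [types_comp_apply, TypeCat.ofHom_apply] at h1 h2
  rw [haa'] at h1
  exact Sum.inl.inj (h1.symm.trans h2)

/-- If r lifts against `Sum.inl : X → X ⊕ Y`, then r is surjective. -/
lemma surj_of_lift (r : X ⟶ Y) (h : HasLiftingProperty (TypeCat.ofHom Sum.inl : X ⟶ X ⊕ Y) r) :
    Function.Surjective r := by
  have sq : CommSq (𝟙 X) (TypeCat.ofHom Sum.inl : X ⟶ X ⊕ Y) r (TypeCat.ofHom (Sum.elim r id) : X ⊕ Y ⟶ Y) := ⟨rfl⟩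
  obtain ⟨lift, _, hfr⟩ := (h.sq_hasLift sq).exists_lift.some
  intro y
  exact ⟨lift (Sum.inr y), types_congr_hom hfr (Sum.inr y)⟩

/-- If r with empty domain lifts against PEmpty → PUnit, codomain is empty. -/
lemma empty_cod_of_lift (r : X ⟶ Y) [IsEmpty X]
    (h : HasLiftingProperty (TypeCat.ofHom (fun x : PEmpty.{u+1} => x.elim) : PEmpty.{u+1} ⟶ PUnit.{u+1}) r) : IsEmpty Y := by
  constructor
  intro y
  have sq : CommSq (TypeCat.ofHom (fun x : PEmpty.{u+1} => x.elim) : PEmpty.{u+1} ⟶ X)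
      (TypeCat.ofHom (fun x : PEmpty.{u+1} => x.elim) : PEmpty.{u+1} ⟶ PUnit.{u+1}) r (TypeCat.ofHom (fun _ => y) : PUnit.{u+1} ⟶ Y) :=
    ⟨by ext x; exact x.elim⟩
  obtain ⟨lift, _, _⟩ := (h.sq_hasLift sq).exists_lift.some
  exact isEmptyElim (lift PUnit.unit)

end Helpers

/-- The triple (injections, {surjective or empty domain}, {nonempty domain or empty
codomain}) is a model structure on the category of sets. -/
theorem set_injective_model_structure :
    IsModelStructure
      (fun _ _ f => Function.Injective f : MorphismProperty (Type u))
      (fun A _ f => Function.Surjective f ∨ IsEmpty A)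
      (fun A B _ => Nonempty A ∨ IsEmpty B) := by
  refine ⟨?_, ⟨?_, ?_, ?_⟩, ⟨?_, ?_, ?_⟩⟩
  · -- 2-out-of-3
    intro A B D f g
    refine ⟨?_, ?_, ?_⟩
    · rintro (h | h) hg
      · exact Or.inl h
      · rcases hg with h' | h'
        · exact (h.false h'.some).elim
        · exact Or.inr h'
    · intro hf hfg
      rcases hfg with h | h
      · exact Or.inl ⟨f h.some⟩
      · exact Or.inr h
    · intro hg hfg
      rcases hfg with h | h
      · exact Or.inl h
      · exact Or.inr ⟨fun b => h.false (g b)⟩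
  · -- factorization for (C ∩ W, F)
    intro A B f
    by_cases h : Nonempty A
    · exact ⟨A ⊕ B, TypeCat.ofHom Sum.inl, TypeCat.ofHom (Sum.elim f id), ⟨Sum.inl_injective, Or.inl h⟩,
        Or.inl (fun b => ⟨Sum.inr b, rfl⟩), rfl⟩
    · haveI : IsEmpty A := not_nonempty_iff.mp h
      exact ⟨A, 𝟙 A, f, ⟨fun a => isEmptyElim a, Or.inr ‹IsEmpty A›⟩, Or.inr ‹IsEmpty A›,
        Category.id_comp f⟩
  · -- left characterization for (C ∩ W, F)
    intro A B l
    constructor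
    · rintro ⟨hinj, hW⟩ X Y r hr
      rcases hr with hr | hr
      · exact lift_of_surj l r hinj hr
      · exact lift_of_empty_X l r hW
    · intro h
      have hinj : Function.Injective l :=
        inj_of_lift l (h _ (Or.inl (fun b => ⟨Sum.inr b, rfl⟩)))
      refine ⟨hinj, ?_⟩
      by_cases hA : Nonempty A
      · exact Or.inl hA
      · haveI : IsEmpty A := not_nonempty_iff.mp hA
        right
        have hlift := h (TypeCat.ofHom (fun x : PEmpty.{u+1} => x.elim) : PEmpty.{u+1} ⟶ PUnit.{u+1}) (Or.inr inferInstance)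
        have sq : CommSq (TypeCat.ofHom (fun a : A => isEmptyElim a) : A ⟶ PEmpty.{u+1}) l
            (TypeCat.ofHom (fun x : PEmpty.{u+1} => x.elim) : PEmpty.{u+1} ⟶ PUnit.{u+1}) (TypeCat.ofHom (fun _ => PUnit.unit) : B ⟶ PUnit.{u+1}) :=
          ⟨ConcreteCategory.hom_ext _ _ (fun a => isEmptyElim a)⟩
        obtain ⟨lift, _, _⟩ := (hlift.sq_hasLift sq).exists_lift.some
        exact ⟨fun b => (lift b).elim⟩
  · -- right characterization for (C ∩ W, F)
    intro X Y r
    constructor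
    · rintro (hr | hr) A B l ⟨hinj, hW⟩
      · exact lift_of_surj l r hinj hr
      · exact lift_of_empty_X l r hW
    · intro h
      by_cases hX : Nonempty X
      · exact Or.inl (surj_of_lift r (h (TypeCat.ofHom Sum.inl) ⟨Sum.inl_injective, Or.inl hX⟩))
      · exact Or.inr (not_nonempty_iff.mp hX)
  · -- factorization for (C, F ∩ W)
    intro A B f
    refine ⟨A ⊕ B, TypeCat.ofHom Sum.inl, TypeCat.ofHom (Sum.elim f id), Sum.inl_injective,
      ⟨Or.inl (fun b => ⟨Sum.inr b, rfl⟩), ?_⟩, rfl⟩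
    by_cases hB : Nonempty B
    · exact Or.inl ⟨Sum.inr hB.some⟩
    · exact Or.inr (not_nonempty_iff.mp hB)
  · -- left characterization for (C, F ∩ W)
    intro A B l
    constructor
    · rintro hinj X Y r ⟨hF, hW⟩
      rcases hF with hr | hr
      · exact lift_of_surj l r hinj hr
      · haveI := hr
        rcases hW with hX | hY
        · exact (hr.false hX.some).elim
        · haveI := hY
          exact lift_of_empty_Y l r
    · intro h
      by_cases hB : Nonempty B
      · refine inj_of_lift l (h _ ⟨Or.inl (fun b => ⟨Sum.inr b, rfl⟩), Or.inl ⟨Sum.inr hB.some⟩⟩)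
      · haveI : IsEmpty B := not_nonempty_iff.mp hB
        intro a _ _
        exact isEmptyElim (l a)
  · -- right characterization for (C, F ∩ W)
    intro X Y r
    constructor
    · rintro ⟨hF, hW⟩ A B l hinj
      rcases hF with hr | hr
      · exact lift_of_surj l r hinj hr
      · haveI := hr
        rcases hW with hX | hY
        · exact (hr.false hX.some).elim
        · haveI := hY
          exact lift_of_empty_Y l r
    · intro h
      by_cases hX : Nonempty X
      · exact ⟨Or.inl (surj_of_lift r (h (TypeCat.ofHom Sum.inl) Sum.inl_injective)), Or.inl hX⟩
      · haveI : IsEmpty X := not_nonempty_iff.mp hX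
        refine ⟨Or.inr ‹IsEmpty X›, Or.inr ?_⟩
        exact empty_cod_of_lift r (h _ (fun a => isEmptyElim a))
end

section
/- The triple (C, F, W) on the category of types given by C = all functions, F = {f : A → B | f bijective or A empty}, W = {f : A → B | A nonempty or B empty} is a model structure: W satisfies the 2-out-of-3 property and both (C ∩ W, F) and (C, F ∩ W) are weak factorization systems. -/
universe u

open CategoryTheory

lemma lift_bij {A B X Y : Type u} (l : A ⟶ B) (r : X ⟶ Y)
    (hr : Function.Bijective r) : HasLiftingProperty l r := by
  constructor
  intro f g sq
  let e := Equiv.ofBijective r hr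
  refine ⟨⟨⟨TypeCat.ofHom (fun b => e.symm (g b)), ?_, ?_⟩⟩⟩
  · ext a
    have hw : r (f a) = g (l a) := types_congr_hom sq.w a
    show e.symm (g (l a)) = f a
    rw [← hw]
    exact e.symm_apply_apply (f a)
  · ext b
    exact e.apply_symm_apply (g b)

lemma lift_empty {A B X Y : Type u} (l : A ⟶ B) (r : X ⟶ Y)
    (hX : IsEmpty X) (hW : Nonempty A ∨ IsEmpty B) : HasLiftingProperty l r := by
  constructor
  intro f g sq
  have hA : IsEmpty A := ⟨fun a => hX.false (f a)⟩
  have hB : IsEmpty B := hW.resolve_left (not_nonempty_iff.mpr hA)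
  refine ⟨⟨⟨TypeCat.ofHom (fun b => (hB.false b).elim), ?_, ?_⟩⟩⟩
  · ext a; exact (hA.false a).elim
  · ext b; exact (hB.false b).elim

lemma bij_of_self_lift {X Y : Type u} (r : X ⟶ Y) (h : HasLiftingProperty r r) :
    Function.Bijective r := by
  have sq : CommSq (𝟙 X) r r (𝟙 Y) := ⟨by simp⟩
  obtain ⟨lft, h1, h2⟩ := (h.sq_hasLift sq).exists_lift.some
  exact Function.bijective_iff_has_inverse.mpr
    ⟨lft, fun x => types_congr_hom h1 x, fun y => types_congr_hom h2 y⟩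

/-- The triple (all functions, {bijective or empty domain}, {nonempty domain or empty
codomain}) is a model structure on the category of sets. -/
theorem set_all_model_structure :
    IsModelStructure
      (fun _ _ _ => True : MorphismProperty (Type u))
      (fun A _ f => Function.Bijective f ∨ IsEmpty A)
      (fun A B _ => Nonempty A ∨ IsEmpty B) := by
  refine ⟨?_, ⟨?_, ?_, ?_⟩, ⟨?_, ?_, ?_⟩⟩
  · -- 2-out-of-3
    intro A B D f g
    refine ⟨?_, ?_, ?_⟩
    · rintro (hA | hB) (hB' | hD)
      · exact Or.inl hA
      · exact Or.inl hA
      · exact (hB.false hB'.some).elim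
      · exact Or.inr hD
    · rintro (hA | hB) h2
      · exact Or.inl ⟨f hA.some⟩
      · exact h2.elim (fun hA => Or.inl ⟨f hA.some⟩) Or.inr
    · rintro h1 (hA | hD)
      · exact Or.inl hA
      · exact h1.elim (fun hB => (hD.false (g hB.some)).elim)
          (fun _ => Or.inr (Function.isEmpty g))
  · -- WFS1 factorization
    intro A B f
    by_cases h : Nonempty A
    · exact ⟨B, f, 𝟙 B, ⟨trivial, Or.inl h⟩, Or.inl (Equiv.refl B).bijective,
        Category.comp_id f⟩
    · have hA : IsEmpty A := not_nonempty_iff.mp h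
      exact ⟨A, 𝟙 A, f, ⟨trivial, Or.inr hA⟩, Or.inr hA, Category.id_comp f⟩
  · -- WFS1 left class
    intro A B l
    constructor
    · rintro ⟨-, hW⟩ X Y r hr
      rcases hr with hb | hX
      · exact lift_bij l r hb
      · exact lift_empty l r hX hW
    · intro h
      refine ⟨trivial, ?_⟩
      by_cases hA : Nonempty A
      · exact Or.inl hA
      · have hAe : IsEmpty A := not_nonempty_iff.mp hA
        right
        have hlp := h (TypeCat.ofHom (isEmptyElim : PEmpty.{u+1} → B)) (Or.inr inferInstance)
        have sq : CommSq (TypeCat.ofHom (isEmptyElim : A → PEmpty.{u+1})) l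
            (TypeCat.ofHom (isEmptyElim : PEmpty.{u+1} → B)) (𝟙 B) := ⟨by ext a; exact hAe.elim a⟩
        obtain ⟨lft, -, -⟩ := (hlp.sq_hasLift sq).exists_lift.some
        exact Function.isEmpty lft
  · -- WFS1 right class
    intro X Y r
    constructor
    · rintro hr A B l ⟨-, hW⟩
      rcases hr with hb | hX
      · exact lift_bij l r hb
      · exact lift_empty l r hX hW
    · intro h
      by_cases hX : Nonempty X
      · exact Or.inl (bij_of_self_lift r (h r ⟨trivial, Or.inl hX⟩))
      · exact Or.inr (not_nonempty_iff.mp hX)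
  · -- WFS2 factorization
    intro A B f
    refine ⟨B, f, 𝟙 B, trivial, ⟨Or.inl (Equiv.refl B).bijective, ?_⟩, Category.comp_id f⟩
    by_cases h : Nonempty B
    · exact Or.inl h
    · exact Or.inr (not_nonempty_iff.mp h)
  · -- WFS2 left class
    intro A B l
    constructor
    · rintro - X Y r ⟨hF, hW⟩
      rcases hF with hb | hX
      · exact lift_bij l r hb
      · have hY : IsEmpty Y := hW.resolve_left (not_nonempty_iff.mpr hX)
        exact lift_bij l r ⟨fun a => hX.elim a, fun y => hY.elim y⟩
    · intro _; trivial
  · -- WFS2 right class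
    intro X Y r
    constructor
    · rintro ⟨hF, hW⟩ A B l -
      rcases hF with hb | hX
      · exact lift_bij l r hb
      · have hY : IsEmpty Y := hW.resolve_left (not_nonempty_iff.mpr hX)
        exact lift_bij l r ⟨fun a => hX.elim a, fun y => hY.elim y⟩
    · intro h
      have hb := bij_of_self_lift r (h r trivial)
      refine ⟨Or.inl hb, ?_⟩
      by_cases hX : Nonempty X
      · exact Or.inl hX
      · have hXe : IsEmpty X := not_nonempty_iff.mp hX
        exact Or.inr ⟨fun y => by obtain ⟨x, -⟩ := hb.2 y; exact hXe.elim x⟩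
end

section
/- On the category of types, let C = {f : A → B | A nonempty or B empty}, F = injections, and W = {f : A → B | f surjective or A empty}. Then C ∩ W = surjections and F ∩ W = {f : A → B | f bijective or A empty}; both (C ∩ W, F) and (C, F ∩ W) are weak factorization systems; W is exactly the class of composites r ∘ l with l ∈ C ∩ W and r ∈ F ∩ W; yet W does not satisfy the 2-out-of-3 property, so (C, F, W) is not a model structure. -/
universe u

open CategoryTheory

lemma hlp_surj_inj {A B X Y : Type u} (i : A ⟶ B) (p : X ⟶ Y)
    (hi : Function.Surjective i) (hp : Function.Injective p) :
    HasLiftingProperty i p := by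
  constructor
  intro f g sq
  have w : ∀ a, p (f a) = g (i a) := fun a => types_congr_hom sq.w a
  refine ⟨⟨⟨TypeCat.ofHom (fun b => f (hi b).choose), ?_, ?_⟩⟩⟩
  · ext a
    show f (hi (i a)).choose = f a
    apply hp
    rw [w, w, (hi (i a)).choose_spec]
  · ext b
    show p (f (hi b).choose) = g b
    rw [w, (hi b).choose_spec]

lemma hlp_C_FW {A B X Y : Type u} (i : A ⟶ B) (p : X ⟶ Y)
    (hi : Nonempty A ∨ IsEmpty B) (hp : Function.Bijective p ∨ IsEmpty X) :
    HasLiftingProperty i p := by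
  constructor
  intro f g sq
  have w : ∀ a, p (f a) = g (i a) := fun a => types_congr_hom sq.w a
  rcases hp with hp | hX
  · obtain ⟨q, hq1, hq2⟩ := Function.bijective_iff_has_inverse.1 hp
    refine ⟨⟨⟨TypeCat.ofHom (fun b => q (g b)), ?_, ?_⟩⟩⟩
    · ext a
      show q (g (i a)) = f a
      rw [← w, hq1]
    · ext b
      show p (q (g b)) = g b
      rw [hq2]
  · have hA : IsEmpty A := ⟨fun a => hX.false (f a)⟩
    rcases hi with hA' | hB
    · exact absurd hA' (not_nonempty_iff.2 hA)
    · refine ⟨⟨⟨TypeCat.ofHom (fun b => hB.elim b), ?_, ?_⟩⟩⟩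
      · ext a; exact hA.elim a
      · ext b; exact hB.elim b

-- LLP against all injections implies surjective
lemma surj_of_llp {A B : Type u} (l : A ⟶ B)
    (h : ∀ {X Y : Type u} (r : X ⟶ Y), Function.Injective r → HasLiftingProperty l r) :
    Function.Surjective l := by
  haveI := h (TypeCat.ofHom (Subtype.val : Set.range l → B)) Subtype.val_injective
  have sq : CommSq (TypeCat.ofHom (Set.rangeFactorization l)) l (TypeCat.ofHom (Subtype.val : Set.range l → B)) (𝟙 B) := by
    constructor; ext a; rfl
  intro b
  have hb : (sq.lift b).val = b := types_congr_hom sq.fac_right b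
  obtain ⟨a, ha⟩ := (sq.lift b).2
  exact ⟨a, ha.trans hb⟩

-- RLP against all surjections implies injective
lemma inj_of_rlp {X Y : Type u} (r : X ⟶ Y)
    (h : ∀ {A B : Type u} (l : A ⟶ B), Function.Surjective l → HasLiftingProperty l r) :
    Function.Injective r := by
  set Rel : X → X → Prop := fun x₁ x₂ => r x₁ = r x₂ with hRel
  haveI := h (TypeCat.ofHom (Quot.mk Rel : X → Quot Rel)) (Quot.mk_surjective)
  have sq : CommSq (𝟙 X) (TypeCat.ofHom (Quot.mk Rel : X → Quot Rel)) r (TypeCat.ofHom (Quot.lift (⇑r) (fun _ _ hab => hab))) := by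
    constructor; ext x; rfl
  intro x₁ x₂ hx
  have h1 : ∀ x, sq.lift (Quot.mk Rel x) = x := fun x => types_congr_hom sq.fac_left x
  calc x₁ = sq.lift (Quot.mk Rel x₁) := (h1 x₁).symm
    _ = sq.lift (Quot.mk Rel x₂) := congrArg (⇑sq.lift) (Quot.sound (r := Rel) hx)
    _ = x₂ := h1 x₂

lemma llp_C {A B : Type u} (l : A ⟶ B)
    (h : ∀ {X Y : Type u} (r : X ⟶ Y),
      (Function.Injective r ∧ (Function.Surjective r ∨ IsEmpty X)) → HasLiftingProperty l r) :
    Nonempty A ∨ IsEmpty B := by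
  by_contra hc
  push_neg at hc
  obtain ⟨hA, hB⟩ := hc
  haveI hA' : IsEmpty A := hA
  haveI hB' : Nonempty B := hB
  haveI := h (TypeCat.ofHom (fun x => x.elim : PEmpty.{u+1} → PUnit.{u+1}))
    ⟨fun a => a.elim, Or.inr inferInstance⟩
  have sq : CommSq (TypeCat.ofHom (isEmptyElim : A → PEmpty.{u+1})) l (TypeCat.ofHom (fun x => x.elim : PEmpty.{u+1} → PUnit.{u+1}))
      (TypeCat.ofHom (fun _ => PUnit.unit)) := by
    constructor; ext a
  exact (sq.lift hB'.some).elim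

lemma rlp_FW {X Y : Type u} (r : X ⟶ Y)
    (h : ∀ {A B : Type u} (l : A ⟶ B), (Nonempty A ∨ IsEmpty B) → HasLiftingProperty l r) :
    Function.Injective r ∧ (Function.Surjective r ∨ IsEmpty X) := by
  rcases isEmpty_or_nonempty X with hX | hX
  · exact ⟨fun a => hX.elim a, Or.inr hX⟩
  · haveI := h r (Or.inl hX)
    have sq : CommSq (𝟙 X) r r (𝟙 Y) := ⟨by simp⟩
    have h1 : ∀ x, sq.lift (r x) = x := fun x => types_congr_hom sq.fac_left x
    have h2 : ∀ y, r (sq.lift y) = y := fun y => types_congr_hom sq.fac_right y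
    exact ⟨Function.LeftInverse.injective h1, Or.inl fun y => ⟨sq.lift y, h2 y⟩⟩

/-- With `C = {nonempty domain or empty codomain}`, `F = injections`,
`W = {surjective or empty domain}`: `C ∩ W` is the surjections, `F ∩ W` is
`{bijective or empty domain}`, both `(C ∩ W, F)` and `(C, F ∩ W)` are weak
factorization systems, `W` is exactly the class of composites of a map in `C ∩ W`
followed by a map of `F ∩ W`, yet `W` fails 2-out-of-3, and `(C, F, W)` is not a
model structure. -/
theorem set_wfs_pair_not_model_structure :
    letI C : MorphismProperty (Type u) := fun A B _ => Nonempty A ∨ IsEmpty B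
    letI F : MorphismProperty (Type u) := fun _ _ f => Function.Injective f
    letI W : MorphismProperty (Type u) := fun A _ f => Function.Surjective f ∨ IsEmpty A
    interMP C W = (fun _ _ f => Function.Surjective f : MorphismProperty (Type u)) ∧
      interMP F W = (fun A _ f => Function.Bijective f ∨ IsEmpty A : MorphismProperty (Type u)) ∧
      IsWFS (interMP C W) F ∧
      IsWFS C (interMP F W) ∧
      (∀ {A B : Type u} (f : A ⟶ B),
        W f ↔ ∃ (E : Type u) (l : A ⟶ E) (r : E ⟶ B),
          interMP C W l ∧ interMP F W r ∧ l ≫ r = f) ∧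
      ¬ TwoOutOfThree W ∧
      ¬ IsModelStructure C F W := by

  have h1 : interMP (fun A B _ => Nonempty A ∨ IsEmpty B : MorphismProperty (Type u))
      (fun A _ f => Function.Surjective f ∨ IsEmpty A) = (fun _ _ f => Function.Surjective f : MorphismProperty (Type u)) := by
    funext A B f
    simp only [interMP, eq_iff_iff]
    constructor
    · rintro ⟨hC, hsurj | hA⟩
      · exact hsurj
      · rcases hC with hA' | hB
        · exact absurd hA' (not_nonempty_iff.2 hA)
        · exact fun b => hB.elim b
    · intro hs
      refine ⟨?_, Or.inl hs⟩
      rcases isEmpty_or_nonempty A with hA | hA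
      · exact Or.inr ⟨fun b => hA.false (hs b).choose⟩
      · exact Or.inl hA
  have h2 : interMP (fun _ _ f => Function.Injective f : MorphismProperty (Type u))
      (fun A _ f => Function.Surjective f ∨ IsEmpty A) = (fun A _ f => Function.Bijective f ∨ IsEmpty A : MorphismProperty (Type u)) := by
    funext A B f
    simp only [interMP, eq_iff_iff]
    constructor
    · rintro ⟨hinj, hsurj | hA⟩
      · exact Or.inl ⟨hinj, hsurj⟩
      · exact Or.inr hA
    · rintro (hbij | hA)
      · exact ⟨hbij.1, Or.inl hbij.2⟩
      · exact ⟨fun a => hA.elim a, Or.inr hA⟩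
  have hwfs1 : IsWFS (interMP (fun A B _ => Nonempty A ∨ IsEmpty B : MorphismProperty (Type u))
      (fun A _ f => Function.Surjective f ∨ IsEmpty A)) (fun _ _ f => Function.Injective f) := by
    rw [h1]
    refine ⟨?_, ?_, ?_⟩
    · intro A B f
      exact ⟨Set.range f, TypeCat.ofHom (Set.rangeFactorization f), TypeCat.ofHom Subtype.val,
        Set.rangeFactorization_surjective, Subtype.val_injective, rfl⟩
    · intro A B l
      exact ⟨fun hl _ _ r hr => hlp_surj_inj l r hl hr, fun h => surj_of_llp l h⟩
    · intro X Y r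
      exact ⟨fun hr _ _ l hl => hlp_surj_inj l r hl hr, fun h => inj_of_rlp r h⟩
  have hwfs2 : IsWFS (fun A B _ => Nonempty A ∨ IsEmpty B : MorphismProperty (Type u))
      (interMP (fun _ _ f => Function.Injective f)
        (fun A _ f => Function.Surjective f ∨ IsEmpty A)) := by
    rw [h2]
    refine ⟨?_, ?_, ?_⟩
    · intro A B f
      rcases isEmpty_or_nonempty A with hA | hA
      · exact ⟨A, 𝟙 A, f, Or.inr hA, Or.inr hA, Category.id_comp f⟩
      · exact ⟨B, f, 𝟙 B, Or.inl hA, Or.inl Function.bijective_id, Category.comp_id f⟩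
    · intro A B l
      constructor
      · exact fun hl _ _ r hr => hlp_C_FW l r hl hr
      · intro h
        apply llp_C
        intro X Y r hr
        refine h r ?_
        rcases hr.2 with hs | hX
        · exact Or.inl ⟨hr.1, hs⟩
        · exact Or.inr hX
    · intro X Y r
      constructor
      · rintro hr _ _ l hl
        exact hlp_C_FW l r hl (hr.imp_right fun hX => hX)
      · intro h
        have := rlp_FW r (fun l hl => h l hl)
        rcases this.2 with hs | hX
        · exact Or.inl ⟨this.1, hs⟩
        · exact Or.inr hX
  refine ⟨h1, h2, hwfs1, hwfs2, ?_, ?_, ?_⟩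
  · intro A B f
    rw [h1, h2]
    constructor
    · rintro (hs | hA)
      · exact ⟨B, f, 𝟙 B, hs, Or.inl Function.bijective_id, Category.comp_id f⟩
      · exact ⟨A, 𝟙 A, f, Function.surjective_id, Or.inr hA, Category.id_comp f⟩
    · rintro ⟨E, l, r, hl, hr, hcomp⟩
      subst hcomp
      rcases hr with hbij | hE
      · exact Or.inl (hbij.2.comp hl)
      · exact Or.inr ⟨fun a => hE.false (l a)⟩
  · intro h23
    have := (h23 (TypeCat.ofHom (fun x => x.elim : PEmpty.{u+1} → PUnit.{u+1}))
      (TypeCat.ofHom (fun _ => (⟨true⟩ : ULift.{u} Bool)))).2.1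
    have hg := this (Or.inr inferInstance) (Or.inr inferInstance)
    rcases hg with hs | hP
    · obtain ⟨x, hx⟩ := hs ⟨false⟩
      exact Bool.noConfusion (congrArg ULift.down hx)
    · exact hP.elim PUnit.unit
  · intro hm
    have h23 : TwoOutOfThree (fun A _ f => Function.Surjective f ∨ IsEmpty A : MorphismProperty (Type u)) := hm.1
    have := (h23 (TypeCat.ofHom (fun x => x.elim : PEmpty.{u+1} → PUnit.{u+1}))
      (TypeCat.ofHom (fun _ => (⟨true⟩ : ULift.{u} Bool)))).2.1
    have hg := this (Or.inr inferInstance) (Or.inr inferInstance)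
    rcases hg with hs | hP
    · obtain ⟨x, hx⟩ := hs ⟨false⟩
      exact Bool.noConfusion (congrArg ULift.down hx)
    · exact hP.elim PUnit.unit
end

section
/- Every colimit-preserving functor F : Type u ⥤ Type u is naturally isomorphic to the functor X ↦ F(PUnit) × X; in particular, a colimit-preserving endofunctor of the category of types is determined up to natural isomorphism by its value on the singleton set. -/
universe u

open CategoryTheory

open CategoryTheory.Limits in
/-- Every colimit-preserving endofunctor of the category of types is naturally
isomorphic to `X ↦ F(PUnit) × X`; in particular it is determined up to natural
isomorphism by its value on the singleton. -/
theorem colimit_preserving_endofunctor_of_types (F : Type u ⥤ Type u)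
    [Limits.PreservesColimits F] :
    Nonempty (F ≅
      ({ obj := fun X => F.obj PUnit × X
         map := fun f => TypeCat.ofHom (fun p => (p.1, f p.2)) } : Type u ⥤ Type u)) := by
  let G : Type u ⥤ Type u :=
    { obj := fun X => F.obj PUnit × X
      map := fun f => TypeCat.ofHom (fun p => (p.1, f p.2)) }
  let α : G ⟶ F :=
    { app := fun X => TypeCat.ofHom (fun p => F.map (TypeCat.ofHom (fun _ => p.2)) p.1)
      naturality := by
        intro X Y f
        ext p
        exact F.map_comp_apply (TypeCat.ofHom (fun _ => p.2)) f p.1 }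
  have hiso : ∀ X : Type u, IsIso (α.app X) := by
    intro X
    let c : Cocone (Discrete.functor (fun _ : X => PUnit.{u+1})) :=
      { pt := X
        ι := Discrete.natTrans (fun x => TypeCat.ofHom (fun _ => x.as)) }
    have hc : IsColimit c :=
      { desc := fun s => TypeCat.ofHom (fun x => s.ι.app ⟨x⟩ PUnit.unit)
        fac := by
          rintro s ⟨x⟩
          ext u
          cases u
          rfl
        uniq := by
          intro s m hm
          ext x
          exact ConcreteCategory.congr_hom (hm ⟨x⟩) PUnit.unit }
    let t : Cocone (Discrete.functor (fun _ : X => PUnit.{u+1}) ⋙ F) :=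
      { pt := F.obj PUnit × X
        ι := Discrete.natTrans (fun x => TypeCat.ofHom (fun a => (a, x.as))) }
    have ht : IsColimit t :=
      { desc := fun s => TypeCat.ofHom (fun p => s.ι.app ⟨p.2⟩ p.1)
        fac := by rintro s ⟨x⟩; rfl
        uniq := by
          intro s m hm
          ext p
          exact ConcreteCategory.congr_hom (hm ⟨p.2⟩) p.1 }
    have hFc : IsColimit (F.mapCocone c) := isColimitOfPreserves F hc
    have he : α.app X = (ht.coconePointUniqueUpToIso hFc).hom := by
      ext p
      exact (ConcreteCategory.congr_hom (ht.fac (F.mapCocone c) ⟨p.2⟩) p.1).symm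
    rw [he]
    infer_instance
  haveI : IsIso α := NatIso.isIso_of_isIso_app α
  exact ⟨(asIso α).symm⟩
end

section
/- There are precisely six weak factorization systems on the category of pointed sets: a pair (L, R) of classes of pointed maps is a weak factorization system if and only if it equals one of the following six pairs: (1) (all pointed maps, bij); (2) (inj_{≠⋆}, surj ∩ inj_⋆); (3) (surj, inj); (4) (inj, surj); (5) (surj ∩ inj_{≠⋆}, inj_⋆); (6) (bij, all pointed maps). -/
universe u

open CategoryTheory

/-- Pointed maps whose underlying function is bijective. -/
def pBij : MorphismProperty Pointed.{u} := fun _ _ f => Function.Bijective f.toFun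

/-- Pointed maps whose underlying function is injective. -/
def pInj : MorphismProperty Pointed.{u} := fun _ _ f => Function.Injective f.toFun

/-- Pointed maps whose underlying function is surjective. -/
def pSurj : MorphismProperty Pointed.{u} := fun _ _ f => Function.Surjective f.toFun

/-- All pointed maps. -/
def pAny : MorphismProperty Pointed.{u} := fun _ _ _ => True

/-- Pointed maps `f : (A, a) → (B, b)` such that the preimage of the basepoint `b`
is exactly `{a}`. -/
def pInjStar : MorphismProperty Pointed.{u} :=
  fun X Y f => ∀ a : X, f.toFun a = Y.point → a = X.point

/-- Pointed maps `f : (A, a) → (B, b)` that are injective on the complement of the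
preimage of the basepoint `b`. -/
def pInjNeStar : MorphismProperty Pointed.{u} :=
  fun _ Y f => ∀ a a', f.toFun a ≠ Y.point → f.toFun a' ≠ Y.point →
    f.toFun a = f.toFun a' → a = a'

noncomputable section

namespace PWFS

/-- Build a lifting property in `Pointed` from an explicit lift constructor. -/
lemma buildHLP {A B X Y : Pointed.{u}} (i : A ⟶ B) (p : X ⟶ Y)
    (H : ∀ (f : A ⟶ X) (g : B ⟶ Y), f ≫ p = i ≫ g →
      ∃ d : B ⟶ X, i ≫ d = f ∧ d ≫ p = g) : HasLiftingProperty i p := by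
  constructor
  intro f g sq
  obtain ⟨d, h1, h2⟩ := H f g sq.w
  exact ⟨⟨⟨d, h1, h2⟩⟩⟩

lemma sq_elem {A B X Y : Pointed.{u}} {i : A ⟶ B} {p : X ⟶ Y} {f : A ⟶ X} {g : B ⟶ Y}
    (w : f ≫ p = i ≫ g) (a : A.X) : p.toFun (f.toFun a) = g.toFun (i.toFun a) :=
  congrFun (congrArg Pointed.Hom.toFun w) a

lemma hom_ext {A B : Pointed.{u}} {f g : A ⟶ B} (h : ∀ a, f.toFun a = g.toFun a) : f = g :=
  Pointed.Hom.ext (funext h)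

end PWFS

namespace PWFS
open Classical

/-- bijections lift (on the right) against everything -/
lemma hlp_bij_right {A B X Y : Pointed.{u}} (i : A ⟶ B) (p : X ⟶ Y)
    (hp : Function.Bijective p.toFun) : HasLiftingProperty i p := by
  apply buildHLP
  intro f g w
  let e := Equiv.ofBijective p.toFun hp
  refine ⟨⟨fun b => e.symm (g.toFun b), ?_⟩, ?_, ?_⟩
  · show e.symm (g.toFun B.point) = X.point
    rw [g.map_point]; exact e.symm_apply_eq.2 p.map_point.symm
  · apply hom_ext; intro a
    show e.symm (g.toFun (i.toFun a)) = f.toFun a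
    rw [← sq_elem w a]
    exact e.symm_apply_apply _
  · apply hom_ext; intro b
    exact e.apply_symm_apply _

/-- bijections lift (on the left) against everything -/
lemma hlp_bij_left {A B X Y : Pointed.{u}} (i : A ⟶ B) (p : X ⟶ Y)
    (hi : Function.Bijective i.toFun) : HasLiftingProperty i p := by
  apply buildHLP
  intro f g w
  let e := Equiv.ofBijective i.toFun hi
  refine ⟨⟨fun b => f.toFun (e.symm b), ?_⟩, ?_, ?_⟩
  · show f.toFun (e.symm B.point) = X.point
    rw [show e.symm B.point = A.point from e.symm_apply_eq.2 i.map_point.symm, f.map_point]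
  · apply hom_ext; intro a
    show f.toFun (e.symm (i.toFun a)) = f.toFun a
    rw [show i.toFun a = e a from rfl, e.symm_apply_apply]
  · apply hom_ext; intro b
    show p.toFun (f.toFun (e.symm b)) = g.toFun b
    rw [sq_elem w (e.symm b)]
    congr 1
    exact e.apply_symm_apply b

/-- injections lift against surjections -/
lemma hlp_inj_surj {A B X Y : Pointed.{u}} (i : A ⟶ B) (p : X ⟶ Y)
    (hi : Function.Injective i.toFun) (hp : Function.Surjective p.toFun) :
    HasLiftingProperty i p := by
  apply buildHLP
  intro f g w
  refine ⟨⟨fun b => if h : ∃ a, i.toFun a = b then f.toFun h.choose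
      else (hp (g.toFun b)).choose, ?_⟩, ?_, ?_⟩
  · show dite _ _ _ = X.point
    rw [dif_pos ⟨A.point, i.map_point⟩]
    rw [hi ((⟨A.point, i.map_point⟩ : ∃ a, i.toFun a = B.point).choose_spec.trans i.map_point.symm)]
    exact f.map_point
  · apply hom_ext; intro a
    show dite _ _ _ = f.toFun a
    rw [dif_pos ⟨a, rfl⟩]
    congr 1
    exact hi (⟨a, rfl⟩ : ∃ a', i.toFun a' = i.toFun a).choose_spec
  · apply hom_ext; intro b
    show p.toFun (dite _ _ _) = g.toFun b
    by_cases h : ∃ a, i.toFun a = b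
    · rw [dif_pos h, sq_elem w h.choose, h.choose_spec]
    · rw [dif_neg h]
      exact (hp (g.toFun b)).choose_spec

/-- surjections lift against injections -/
lemma hlp_surj_inj {A B X Y : Pointed.{u}} (i : A ⟶ B) (p : X ⟶ Y)
    (hi : Function.Surjective i.toFun) (hp : Function.Injective p.toFun) :
    HasLiftingProperty i p := by
  apply buildHLP
  intro f g w
  refine ⟨⟨fun b => f.toFun (hi b).choose, ?_⟩, ?_, ?_⟩
  · show f.toFun (hi B.point).choose = X.point
    apply hp
    rw [sq_elem w, (hi B.point).choose_spec, g.map_point, p.map_point]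
  · apply hom_ext; intro a
    show f.toFun (hi (i.toFun a)).choose = f.toFun a
    apply hp
    rw [sq_elem w, sq_elem w, (hi (i.toFun a)).choose_spec]
  · apply hom_ext; intro b
    show p.toFun (f.toFun (hi b).choose) = g.toFun b
    rw [sq_elem w, (hi b).choose_spec]

end PWFS

namespace PWFS
open Classical

/-- maps injective off the basepoint-fiber lift against pointed surjections whose
basepoint fiber is a singleton -/
lemma hlp_ins_ssi {A B X Y : Pointed.{u}} (i : A ⟶ B) (p : X ⟶ Y)
    (hi : ∀ a a', i.toFun a ≠ B.point → i.toFun a' ≠ B.point →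
      i.toFun a = i.toFun a' → a = a')
    (hps : Function.Surjective p.toFun)
    (hpstar : ∀ x, p.toFun x = Y.point → x = X.point) :
    HasLiftingProperty i p := by
  apply buildHLP
  intro f g w
  refine ⟨⟨fun b => if g.toFun b = Y.point then X.point
      else if h : ∃ a, i.toFun a = b then f.toFun h.choose
      else (hps (g.toFun b)).choose, ?_⟩, ?_, ?_⟩
  · show ite _ _ _ = X.point
    rw [if_pos g.map_point]
  · apply hom_ext; intro a
    show ite _ _ _ = f.toFun a
    by_cases hg : g.toFun (i.toFun a) = Y.point
    · rw [if_pos hg]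
      exact (hpstar (f.toFun a) ((sq_elem w a).trans hg)).symm
    · rw [if_neg hg, dif_pos ⟨a, rfl⟩]
      have hc := (⟨a, rfl⟩ : ∃ a', i.toFun a' = i.toFun a).choose_spec
      congr 1
      refine hi _ _ ?_ ?_ hc
      · rw [hc]; intro hb; exact hg (hb ▸ g.map_point)
      · intro hb; exact hg (hb ▸ g.map_point)
  · apply hom_ext; intro b
    show p.toFun (ite _ _ _) = g.toFun b
    by_cases hg : g.toFun b = Y.point
    · rw [if_pos hg, p.map_point, hg]
    · rw [if_neg hg]
      by_cases h : ∃ a, i.toFun a = b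
      · rw [dif_pos h, sq_elem w h.choose, h.choose_spec]
      · rw [dif_neg h]
        exact (hps (g.toFun b)).choose_spec

/-- surjections injective off the basepoint-fiber lift against maps whose
basepoint fiber is a singleton -/
lemma hlp_ssn_is {A B X Y : Pointed.{u}} (i : A ⟶ B) (p : X ⟶ Y)
    (his : Function.Surjective i.toFun)
    (hin : ∀ a a', i.toFun a ≠ B.point → i.toFun a' ≠ B.point →
      i.toFun a = i.toFun a' → a = a')
    (hpstar : ∀ x, p.toFun x = Y.point → x = X.point) :
    HasLiftingProperty i p := by
  apply buildHLP
  intro f g w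
  refine ⟨⟨fun b => if g.toFun b = Y.point then X.point
      else f.toFun (his b).choose, ?_⟩, ?_, ?_⟩
  · show ite _ _ _ = X.point
    rw [if_pos g.map_point]
  · apply hom_ext; intro a
    show ite _ _ _ = f.toFun a
    by_cases hg : g.toFun (i.toFun a) = Y.point
    · rw [if_pos hg]
      exact (hpstar (f.toFun a) ((sq_elem w a).trans hg)).symm
    · rw [if_neg hg]
      have hc := (his (i.toFun a)).choose_spec
      congr 1
      refine hin _ _ ?_ ?_ hc
      · rw [hc]; intro hb; exact hg (hb ▸ g.map_point)
      · intro hb; exact hg (hb ▸ g.map_point)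
  · apply hom_ext; intro b
    show p.toFun (ite _ _ _) = g.toFun b
    by_cases hg : g.toFun b = Y.point
    · rw [if_pos hg, p.map_point, hg]
    · rw [if_neg hg, sq_elem w, (his b).choose_spec]

end PWFS

namespace PWFS
open Classical

/-- the one-point pointed set -/
abbrev pt : Pointed.{u} := ⟨PUnit, PUnit.unit⟩
/-- the two-point pointed set -/
abbrev two : Pointed.{u} := ⟨Option PUnit.{u+1}, none⟩
/-- the three-point pointed set -/
abbrev three : Pointed.{u} := ⟨Option (ULift.{u} Bool), none⟩

/-- basepoint inclusion `∗ → 2` -/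
def αm : pt.{u} ⟶ two.{u} := ⟨fun _ => none, rfl⟩
/-- collapse `2 → ∗` -/
def βm : two.{u} ⟶ pt.{u} := ⟨fun _ => PUnit.unit, rfl⟩
/-- the fold map `3 → 2` -/
def γm : three.{u} ⟶ two.{u} := ⟨Option.map fun _ => PUnit.unit, rfl⟩

lemma D_alpha_r {X Y : Pointed.{u}} (r : X ⟶ Y) (h : HasLiftingProperty αm.{u} r) :
    Function.Surjective r.toFun := by
  intro y
  have sq : CommSq (⟨fun _ => X.point, rfl⟩ : pt.{u} ⟶ X) αm r
      (⟨fun o => o.elim Y.point (fun _ => y), rfl⟩ : two.{u} ⟶ Y) := by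
    constructor
    apply hom_ext; intro a
    show r.toFun X.point = Y.point
    exact r.map_point
  obtain ⟨⟨d, h1, h2⟩⟩ := (h.sq_hasLift sq).exists_lift
  exact ⟨d.toFun (some PUnit.unit), congrFun (congrArg Pointed.Hom.toFun h2) (some PUnit.unit)⟩

lemma D_beta_r {X Y : Pointed.{u}} (r : X ⟶ Y) (h : HasLiftingProperty βm.{u} r) :
    ∀ x, r.toFun x = Y.point → x = X.point := by
  intro x hx
  have sq : CommSq (⟨fun o => o.elim X.point (fun _ => x), rfl⟩ : two.{u} ⟶ X) βm r
      (⟨fun _ => Y.point, rfl⟩ : pt.{u} ⟶ Y) := by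
    constructor
    apply hom_ext; intro o
    show r.toFun (o.elim X.point (fun _ => x)) = Y.point
    cases o with
    | none => exact r.map_point
    | some _ => exact hx
  obtain ⟨⟨d, h1, h2⟩⟩ := (h.sq_hasLift sq).exists_lift
  have := congrFun (congrArg Pointed.Hom.toFun h1) (some PUnit.unit)
  -- this : d.toFun (βm.toFun (some ⋆)) = x
  rw [show (βm ≫ d).toFun (some PUnit.unit) = d.toFun pt.point from rfl] at this
  rw [d.map_point] at this
  exact this.symm

lemma D_gamma_r {X Y : Pointed.{u}} (r : X ⟶ Y) (h : HasLiftingProperty γm.{u} r) :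
    Function.Injective r.toFun := by
  intro x₁ x₂ hx
  have sq : CommSq (⟨fun o => o.elim X.point (fun b => if b.down then x₁ else x₂), rfl⟩ :
      three.{u} ⟶ X) γm r
      (⟨fun o => o.elim Y.point (fun _ => r.toFun x₁), rfl⟩ : two.{u} ⟶ Y) := by
    constructor
    apply hom_ext; intro o
    cases o with
    | none =>
      show r.toFun X.point = Y.point
      exact r.map_point
    | some b =>
      show r.toFun (if b.down then x₁ else x₂) = r.toFun x₁
      cases hb : b.down <;> simp [hb, hx]
  obtain ⟨⟨d, h1, h2⟩⟩ := (h.sq_hasLift sq).exists_lift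
  have e1 := congrFun (congrArg Pointed.Hom.toFun h1) (some (ULift.up true))
  have e2 := congrFun (congrArg Pointed.Hom.toFun h1) (some (ULift.up false))
  simp only [Pointed.Hom.comp_toFun', Function.comp_apply] at e1 e2
  rw [show γm.toFun (some (ULift.up true)) = some PUnit.unit from rfl] at e1
  rw [show γm.toFun (some (ULift.up false)) = some PUnit.unit from rfl] at e2
  simp only [Option.elim_some, if_pos, if_neg] at e1 e2
  simp at e1 e2
  rw [← e1, ← e2]

end PWFS

namespace PWFS
open Classical

lemma D_l_alpha {A B : Pointed.{u}} (l : A ⟶ B) (h : HasLiftingProperty l αm.{u}) :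
    Function.Surjective l.toFun := by
  intro b
  have sq : CommSq (⟨fun _ => PUnit.unit, rfl⟩ : A ⟶ pt.{u}) l αm
      (⟨fun b' => if ∃ a, l.toFun a = b' then none else some PUnit.unit,
        if_pos ⟨A.point, l.map_point⟩⟩ : B ⟶ two.{u}) := by
    constructor
    apply hom_ext; intro a
    show (none : Option PUnit.{u+1}) = ite _ _ _
    rw [if_pos ⟨a, rfl⟩]
  obtain ⟨⟨d, h1, h2⟩⟩ := (h.sq_hasLift sq).exists_lift
  have e : (none : Option PUnit.{u+1}) =
      (if ∃ a, l.toFun a = b then none else some PUnit.unit) :=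
    congrFun (congrArg Pointed.Hom.toFun h2) b
  by_contra hb
  rw [if_neg (by exact fun ⟨a, ha⟩ => hb ⟨a, ha⟩)] at e
  cases e

lemma D_l_beta {A B : Pointed.{u}} (l : A ⟶ B) (h : HasLiftingProperty l βm.{u}) :
    Function.Injective l.toFun := by
  have key : ∀ a₁ a₂ : A.X, a₁ ≠ A.point → l.toFun a₁ = l.toFun a₂ → a₁ = a₂ := by
    intro a₁ a₂ hne hl
    have sq : CommSq (⟨fun a => if a = a₁ then some PUnit.unit else none,
        if_neg (fun hc => hne hc.symm)⟩ : A ⟶ two.{u}) l βm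
        (⟨fun _ => PUnit.unit, rfl⟩ : B ⟶ pt.{u}) := by
      constructor
      apply hom_ext; intro a; rfl
    obtain ⟨⟨d, h1, h2⟩⟩ := (h.sq_hasLift sq).exists_lift
    have e1 : d.toFun (l.toFun a₁) = (if a₁ = a₁ then some PUnit.unit else none) :=
      congrFun (congrArg Pointed.Hom.toFun h1) a₁
    have e2 : d.toFun (l.toFun a₂) = (if a₂ = a₁ then some PUnit.unit else none) :=
      congrFun (congrArg Pointed.Hom.toFun h1) a₂
    rw [if_pos rfl] at e1
    rw [← hl, e1] at e2
    by_contra hc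
    rw [if_neg (fun hc2 => hc hc2.symm)] at e2
    cases e2
  intro a₁ a₂ hl
  by_cases h1 : a₁ = A.point
  · by_cases h2 : a₂ = A.point
    · rw [h1, h2]
    · exact ((key a₂ a₁ h2 hl.symm).symm)
  · exact key a₁ a₂ h1 hl

lemma D_l_gamma {A B : Pointed.{u}} (l : A ⟶ B) (h : HasLiftingProperty l γm.{u}) :
    ∀ a a', l.toFun a ≠ B.point → l.toFun a' ≠ B.point →
      l.toFun a = l.toFun a' → a = a' := by
  intro a a' ha ha' hl
  by_cases hcase : a = a'
  · exact hcase
  have hpa' : a' ≠ A.point := fun hc => ha' (by rw [hc, l.map_point])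
  have sq : CommSq (⟨fun t => if t = a' then some (ULift.up false)
      else if l.toFun t = l.toFun a then some (ULift.up true) else none, by
        show ite _ _ _ = none
        rw [if_neg (fun hc => hpa' hc.symm), if_neg (fun hc : l.toFun A.point = l.toFun a =>
          ha (hc.symm.trans l.map_point))]⟩ : A ⟶ three.{u}) l γm
      (⟨fun b => if b = l.toFun a then some PUnit.unit else none,
        if_neg (fun hc => ha hc.symm)⟩ : B ⟶ two.{u}) := by
    constructor
    apply hom_ext; intro t
    show γm.toFun (ite _ _ _) = ite _ _ _
    by_cases h1 : t = a'
    · rw [if_pos h1, if_pos (by rw [h1, ← hl])]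
      rfl
    · rw [if_neg h1]
      by_cases h2 : l.toFun t = l.toFun a
      · rw [if_pos h2, if_pos h2]; rfl
      · rw [if_neg h2, if_neg h2]; rfl
  obtain ⟨⟨d, h1, h2⟩⟩ := (h.sq_hasLift sq).exists_lift
  have e1 : d.toFun (l.toFun a) = (if a = a' then some (ULift.up false)
      else if l.toFun a = l.toFun a then some (ULift.up true) else none) :=
    congrFun (congrArg Pointed.Hom.toFun h1) a
  have e2 : d.toFun (l.toFun a') = (if a' = a' then some (ULift.up false)
      else if l.toFun a' = l.toFun a then some (ULift.up true) else none) :=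
    congrFun (congrArg Pointed.Hom.toFun h1) a'
  rw [if_neg hcase, if_pos rfl] at e1
  rw [if_pos rfl] at e2
  rw [hl, e2] at e1
  exact absurd (congrArg (fun o => Option.map ULift.down o) e1) (by simp)

end PWFS

namespace PWFS
open Classical

/-- factorization as a surjection followed by an injection (through the image) -/
lemma fac_surj_inj {A B : Pointed.{u}} (f : A ⟶ B) :
    ∃ (E : Pointed.{u}) (l : A ⟶ E) (r : E ⟶ B),
      Function.Surjective l.toFun ∧ Function.Injective r.toFun ∧ l ≫ r = f := by
  refine ⟨⟨{b : B.X // ∃ a, f.toFun a = b}, ⟨B.point, A.point, f.map_point⟩⟩,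
    ⟨fun a => ⟨f.toFun a, a, rfl⟩, Subtype.ext f.map_point⟩,
    ⟨fun e => e.1, rfl⟩, ?_, ?_, ?_⟩
  · rintro ⟨b, a, ha⟩
    exact ⟨a, Subtype.ext ha⟩
  · intro x y hxy
    exact Subtype.ext hxy
  · apply hom_ext; intro a; rfl

/-- factorization as an injection followed by a surjection (through the product) -/
lemma fac_inj_surj {A B : Pointed.{u}} (f : A ⟶ B) :
    ∃ (E : Pointed.{u}) (l : A ⟶ E) (r : E ⟶ B),
      Function.Injective l.toFun ∧ Function.Surjective r.toFun ∧ l ≫ r = f := by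
  refine ⟨⟨A.X × B.X, (A.point, B.point)⟩,
    ⟨fun a => (a, f.toFun a), by show (A.point, f.toFun A.point) = (A.point, B.point); rw [f.map_point]⟩,
    ⟨fun e => e.2, rfl⟩, ?_, ?_, ?_⟩
  · intro x y hxy
    exact congrArg Prod.fst hxy
  · intro b
    exact ⟨(A.point, b), rfl⟩
  · apply hom_ext; intro a; rfl

/-- factorization: `pInjNeStar` followed by `pSurj ∧ pInjStar` -/
lemma fac_ins_ssi {A B : Pointed.{u}} (f : A ⟶ B) :
    ∃ (E : Pointed.{u}) (l : A ⟶ E) (r : E ⟶ B),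
      (∀ a a', l.toFun a ≠ E.point → l.toFun a' ≠ E.point → l.toFun a = l.toFun a' → a = a') ∧
      (Function.Surjective r.toFun ∧ (∀ x, r.toFun x = B.point → x = E.point)) ∧
      l ≫ r = f := by
  classical
  refine ⟨⟨Option ({a : A.X // f.toFun a ≠ B.point} ⊕
      {b : B.X // b ≠ B.point ∧ ∀ a, f.toFun a ≠ b}), none⟩,
    ⟨fun a => if h : f.toFun a ≠ B.point then some (Sum.inl ⟨a, h⟩) else none,
      dif_neg (fun hc => hc f.map_point)⟩,
    ⟨fun e => e.elim B.point (fun s => s.elim (fun x => f.toFun x.1) (fun x => x.1)), rfl⟩,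
    ?_, ⟨?_, ?_⟩, ?_⟩
  · intro a a' ha ha' hl
    dsimp only at ha ha' hl
    by_cases hfa : f.toFun a = B.point
    · exact absurd (dif_neg (not_not_intro hfa)) ha
    by_cases hfa' : f.toFun a' = B.point
    · exact absurd (dif_neg (not_not_intro hfa')) ha'
    rw [dif_pos hfa, dif_pos hfa'] at hl
    exact congrArg Subtype.val (Sum.inl.inj (Option.some.inj hl))
  · intro b
    by_cases hb : b = B.point
    · exact ⟨none, hb.symm⟩
    · by_cases hr : ∃ a, f.toFun a = b
      · obtain ⟨a, ha⟩ := hr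
        exact ⟨some (Sum.inl ⟨a, fun hc => hb (ha ▸ hc)⟩), ha⟩
      · exact ⟨some (Sum.inr ⟨b, hb, fun a hc => hr ⟨a, hc⟩⟩), rfl⟩
  · rintro (_ | (⟨a, ha⟩ | ⟨b, hb1, hb2⟩)) hx
    · rfl
    · exact absurd hx ha
    · exact absurd hx hb1
  · apply hom_ext; intro a
    show ((if h : f.toFun a ≠ B.point then some (Sum.inl ⟨a, h⟩) else none) :
        Option ({a : A.X // f.toFun a ≠ B.point} ⊕
          {b : B.X // b ≠ B.point ∧ ∀ a, f.toFun a ≠ b})).elim B.point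
        (fun s => s.elim (fun x => f.toFun x.1) (fun x => x.1)) = f.toFun a
    by_cases h : f.toFun a ≠ B.point
    · rw [dif_pos h]; rfl
    · rw [dif_neg h]
      exact (not_not.1 h).symm

/-- factorization: `pSurj ∧ pInjNeStar` followed by `pInjStar` -/
lemma fac_ssn_is {A B : Pointed.{u}} (f : A ⟶ B) :
    ∃ (E : Pointed.{u}) (l : A ⟶ E) (r : E ⟶ B),
      (Function.Surjective l.toFun ∧
        (∀ a a', l.toFun a ≠ E.point → l.toFun a' ≠ E.point → l.toFun a = l.toFun a' → a = a')) ∧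
      (∀ x, r.toFun x = B.point → x = E.point) ∧
      l ≫ r = f := by
  classical
  refine ⟨⟨Option {a : A.X // f.toFun a ≠ B.point}, none⟩,
    ⟨fun a => if h : f.toFun a ≠ B.point then some ⟨a, h⟩ else none,
      dif_neg (fun hc => hc f.map_point)⟩,
    ⟨fun e => e.elim B.point (fun x => f.toFun x.1), rfl⟩,
    ⟨?_, ?_⟩, ?_, ?_⟩
  · rintro (_ | ⟨a, ha⟩)
    · exact ⟨A.point, dif_neg (fun hc => hc f.map_point)⟩
    · exact ⟨a, dif_pos ha⟩
  · intro a a' ha ha' hl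
    dsimp only at ha ha' hl
    by_cases hfa : f.toFun a = B.point
    · exact absurd (dif_neg (not_not_intro hfa)) ha
    by_cases hfa' : f.toFun a' = B.point
    · exact absurd (dif_neg (not_not_intro hfa')) ha'
    rw [dif_pos hfa, dif_pos hfa'] at hl
    exact congrArg Subtype.val (Option.some.inj hl)
  · rintro (_ | ⟨a, ha⟩) hx
    · rfl
    · exact absurd hx ha
  · apply hom_ext; intro a
    show ((if h : f.toFun a ≠ B.point then some ⟨a, h⟩ else none) :
        Option {a : A.X // f.toFun a ≠ B.point}).elim B.point (fun x => f.toFun x.1) = f.toFun a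
    by_cases h : f.toFun a ≠ B.point
    · rw [dif_pos h]; rfl
    · rw [dif_neg h]
      exact (not_not.1 h).symm

end PWFS

namespace PWFS
open Classical

lemma elem {A B : Pointed.{u}} {f g : A ⟶ B} (h : f = g) (a : A.X) :
    f.toFun a = g.toFun a := congrFun (congrArg Pointed.Hom.toFun h) a

lemma dich_alpha {L R : MorphismProperty Pointed.{u}} (h : IsWFS L R) : L αm.{u} ∨ R αm.{u} := by
  obtain ⟨hfac, hL, hR⟩ := h
  obtain ⟨E, j, p, hj, hp, hcomp⟩ := hfac αm.{u}
  by_cases he : ∃ e : E.X, p.toFun e = some PUnit.unit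
  · left
    obtain ⟨e, hpe⟩ := he
    rw [hL]
    intro X Y r hr
    have hjr : HasLiftingProperty j r := (hL j).1 hj r hr
    apply buildHLP
    intro f g w
    have sq : CommSq f j r (p ≫ g) := by
      constructor
      apply hom_ext; intro a
      have := sq_elem w a
      show r.toFun (f.toFun a) = g.toFun (p.toFun (j.toFun a))
      rw [show p.toFun (j.toFun a) = αm.toFun a from elem hcomp a]
      exact this
    obtain ⟨⟨d', h1, h2⟩⟩ := (hjr.sq_hasLift sq).exists_lift
    refine ⟨⟨fun o => d'.toFun (o.elim E.point (fun _ => e)), by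
        show d'.toFun E.point = X.point; exact d'.map_point⟩, ?_, ?_⟩
    · apply hom_ext; intro a
      show d'.toFun E.point = f.toFun a
      cases a
      rw [d'.map_point, show f.toFun PUnit.unit = X.point from f.map_point]
    · apply hom_ext; intro o
      show r.toFun (d'.toFun (o.elim E.point (fun _ => e))) = g.toFun o
      cases o with
      | none =>
        rw [show (none : Option PUnit.{u+1}).elim E.point (fun _ => e) = E.point from rfl]
        have := elem h2 E.point
        show r.toFun (d'.toFun E.point) = g.toFun two.point
        rw [show (g.toFun two.point : Y.X) = Y.point from g.map_point, ← r.map_point]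
        congr 1
        exact d'.map_point
      | some u =>
        have := elem h2 e
        show r.toFun (d'.toFun e) = g.toFun (some u)
        rw [show (d' ≫ r).toFun e = r.toFun (d'.toFun e) from rfl] at this
        rw [this]
        show g.toFun (p.toFun e) = g.toFun (some u)
        rw [hpe]
  · right
    rw [hR]
    intro A B l hl
    have hlp : HasLiftingProperty l p := (hR p).1 hp l hl
    have hp_none : ∀ e : E.X, p.toFun e = (none : Option PUnit.{u+1}) := by
      intro e
      cases hpe : p.toFun e with
      | none => rfl
      | some u => exact absurd ⟨e, by rw [hpe]⟩ he
    apply buildHLP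
    intro f g w
    have sq : CommSq (f ≫ j) l p g := by
      constructor
      apply hom_ext; intro a
      show p.toFun (j.toFun (f.toFun a)) = g.toFun (l.toFun a)
      rw [show p.toFun (j.toFun (f.toFun a)) = αm.toFun (f.toFun a) from elem hcomp _]
      exact sq_elem w a
    obtain ⟨⟨d', h1, h2⟩⟩ := (hlp.sq_hasLift sq).exists_lift
    refine ⟨⟨fun _ => PUnit.unit, rfl⟩, ?_, ?_⟩
    · apply hom_ext; intro a
      show PUnit.unit = f.toFun a
      rfl
    · apply hom_ext; intro b
      show (none : Option PUnit.{u+1}) = g.toFun b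
      rw [show g.toFun b = p.toFun (d'.toFun b) from (elem h2 b).symm]
      exact (hp_none _).symm

end PWFS

namespace PWFS
open Classical

lemma dich_beta {L R : MorphismProperty Pointed.{u}} (h : IsWFS L R) : L βm.{u} ∨ R βm.{u} := by
  obtain ⟨hfac, hL, hR⟩ := h
  obtain ⟨E, j, p, hj, hp, hcomp⟩ := hfac βm.{u}
  by_cases he : j.toFun (some PUnit.unit) = E.point
  · left
    rw [hL]
    intro X Y r hr
    have hjr : HasLiftingProperty j r := (hL j).1 hj r hr
    apply buildHLP
    intro f g w
    -- f : two ⟶ X, g : pt ⟶ Y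
    have sq : CommSq f j r (⟨fun _ => g.toFun PUnit.unit, g.map_point⟩ : E ⟶ Y) := by
      constructor
      apply hom_ext; intro o
      show r.toFun (f.toFun o) = g.toFun PUnit.unit
      exact sq_elem w o
    obtain ⟨⟨d', h1, h2⟩⟩ := (hjr.sq_hasLift sq).exists_lift
    refine ⟨⟨fun _ => d'.toFun E.point, by show d'.toFun E.point = X.point; exact d'.map_point⟩,
      ?_, ?_⟩
    · apply hom_ext; intro o
      show d'.toFun E.point = f.toFun o
      cases o with
      | none => rw [d'.map_point, show f.toFun (none : Option PUnit.{u+1}) = X.point from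
          f.map_point]
      | some u =>
        cases u
        rw [show E.point = j.toFun (some PUnit.unit) from he.symm]
        exact elem h1 (some PUnit.unit)
    · apply hom_ext; intro a
      cases a
      show r.toFun (d'.toFun E.point) = g.toFun PUnit.unit
      exact elem h2 E.point
  · right
    rw [hR]
    intro A B l hl
    have hlp : HasLiftingProperty l p := (hR p).1 hp l hl
    apply buildHLP
    intro f g w
    -- f : A ⟶ two, g : B ⟶ pt
    have sq : CommSq (f ≫ j) l p g := by
      constructor
      apply hom_ext; intro a
      show p.toFun (j.toFun (f.toFun a)) = g.toFun (l.toFun a)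
      rw [show p.toFun (j.toFun (f.toFun a)) = βm.toFun (f.toFun a) from elem hcomp _]
    obtain ⟨⟨d', h1, h2⟩⟩ := (hlp.sq_hasLift sq).exists_lift
    refine ⟨⟨fun b => if d'.toFun b = j.toFun (some PUnit.unit) then some PUnit.unit else none,
      if_neg (by rw [d'.map_point]; exact fun hc => he hc.symm)⟩, ?_, ?_⟩
    · apply hom_ext; intro a
      show (if d'.toFun (l.toFun a) = j.toFun (some PUnit.unit) then some PUnit.unit else none)
        = f.toFun a
      have e1 : d'.toFun (l.toFun a) = j.toFun (f.toFun a) := elem h1 a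
      cases hfa : f.toFun a with
      | none =>
        rw [if_neg]
        rw [e1, hfa]
        rw [show j.toFun (none : Option PUnit.{u+1}) = E.point from j.map_point]
        exact fun hc => he hc.symm
      | some u =>
        cases u
        rw [if_pos]
        rw [e1, hfa]
    · apply hom_ext; intro b
      rfl


lemma dich_gamma {L R : MorphismProperty Pointed.{u}} (h : IsWFS L R) : L γm.{u} ∨ R γm.{u} := by
  obtain ⟨hfac, hL, hR⟩ := h
  obtain ⟨E, j, p, hj, hp, hcomp⟩ := hfac γm.{u}
  have hpj : ∀ t, p.toFun (j.toFun t) = γm.toFun t := fun t => elem hcomp t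
  by_cases hxy : j.toFun (some (ULift.up true)) = j.toFun (some (ULift.up false))
  · left
    rw [hL]
    intro X Y r hr
    have hjr : HasLiftingProperty j r := (hL j).1 hj r hr
    apply buildHLP
    intro f g w
    -- f : three ⟶ X, g : two ⟶ Y
    have sq : CommSq f j r (p ≫ g) := by
      constructor
      apply hom_ext; intro t
      show r.toFun (f.toFun t) = g.toFun (p.toFun (j.toFun t))
      rw [hpj]
      exact sq_elem w t
    obtain ⟨⟨d', h1, h2⟩⟩ := (hjr.sq_hasLift sq).exists_lift
    refine ⟨⟨fun o => d'.toFun (o.elim E.point (fun _ => j.toFun (some (ULift.up true)))), by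
      show d'.toFun E.point = X.point; exact d'.map_point⟩, ?_, ?_⟩
    · apply hom_ext; intro t
      cases t with
      | none =>
        show d'.toFun E.point = f.toFun none
        rw [d'.map_point, show f.toFun (none : Option (ULift.{u} Bool)) = X.point from
          f.map_point]
      | some b =>
        show d'.toFun (j.toFun (some (ULift.up true))) = f.toFun (some b)
        obtain ⟨bb⟩ := b
        cases bb
        · rw [hxy]
          exact elem h1 (some (ULift.up false))
        · exact elem h1 (some (ULift.up true))
    · apply hom_ext; intro o
      cases o with
      | none =>
        show r.toFun (d'.toFun E.point) = g.toFun none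
        rw [d'.map_point, r.map_point,
          show g.toFun (none : Option PUnit.{u+1}) = Y.point from g.map_point]
      | some u =>
        cases u
        show r.toFun (d'.toFun (j.toFun (some (ULift.up true)))) = g.toFun (some PUnit.unit)
        rw [show r.toFun (d'.toFun (j.toFun (some (ULift.up true)))) =
          g.toFun (p.toFun (j.toFun (some (ULift.up true)))) from elem h2 _]
        rw [hpj]
        rfl
  · right
    rw [hR]
    intro A B l hl
    have hlp : HasLiftingProperty l p := (hR p).1 hp l hl
    have hEx : E.point ≠ j.toFun (some (ULift.up true)) := by
      intro hc
      have := hpj (some (ULift.up true))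
      rw [← hc, p.map_point] at this
      cases this
    have hEy : E.point ≠ j.toFun (some (ULift.up false)) := by
      intro hc
      have := hpj (some (ULift.up false))
      rw [← hc, p.map_point] at this
      cases this
    apply buildHLP
    intro f g w
    -- f : A ⟶ three, g : B ⟶ two
    have sq : CommSq (f ≫ j) l p g := by
      constructor
      apply hom_ext; intro a
      show p.toFun (j.toFun (f.toFun a)) = g.toFun (l.toFun a)
      rw [hpj]
      exact sq_elem w a
    obtain ⟨⟨d', h1, h2⟩⟩ := (hlp.sq_hasLift sq).exists_lift
    -- retraction E ⟶ three
    refine ⟨⟨fun b => if d'.toFun b = j.toFun (some (ULift.up true)) then some (ULift.up true)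
        else if d'.toFun b = j.toFun (some (ULift.up false)) then some (ULift.up false)
        else if p.toFun (d'.toFun b) = some PUnit.unit then some (ULift.up true) else none,
        ?_⟩, ?_, ?_⟩
    · show (if d'.toFun B.point = j.toFun (some (ULift.up true)) then some (ULift.up true)
        else if d'.toFun B.point = j.toFun (some (ULift.up false)) then some (ULift.up false)
        else if p.toFun (d'.toFun B.point) = some PUnit.unit then some (ULift.up true)
        else none) = none
      rw [d'.map_point]
      rw [if_neg hEx, if_neg hEy, if_neg (by
        rw [p.map_point]
        exact fun hc => by cases hc)]
    · apply hom_ext; intro a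
      show (if d'.toFun (l.toFun a) = j.toFun (some (ULift.up true)) then some (ULift.up true)
        else if d'.toFun (l.toFun a) = j.toFun (some (ULift.up false)) then some (ULift.up false)
        else if p.toFun (d'.toFun (l.toFun a)) = some PUnit.unit then some (ULift.up true)
        else none) = f.toFun a
      have e1 : d'.toFun (l.toFun a) = j.toFun (f.toFun a) := elem h1 a
      rw [e1]
      cases hfa : f.toFun a with
      | none =>
        rw [show j.toFun (none : Option (ULift.{u} Bool)) = E.point from j.map_point]
        rw [if_neg hEx, if_neg hEy,
          if_neg (by rw [p.map_point]; exact fun hc => by cases hc)]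
      | some b =>
        obtain ⟨bb⟩ := b
        cases bb
        · rw [if_neg (fun hc => hxy hc.symm), if_pos rfl]
        · rw [if_pos rfl]
    · apply hom_ext; intro b
      show γm.toFun (if d'.toFun b = j.toFun (some (ULift.up true)) then some (ULift.up true)
        else if d'.toFun b = j.toFun (some (ULift.up false)) then some (ULift.up false)
        else if p.toFun (d'.toFun b) = some PUnit.unit then some (ULift.up true)
        else none) = g.toFun b
      have e2 : p.toFun (d'.toFun b) = g.toFun b := elem h2 b
      by_cases c1 : d'.toFun b = j.toFun (some (ULift.up true))
      · rw [if_pos c1]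
        rw [← e2, c1, hpj]
      · rw [if_neg c1]
        by_cases c2 : d'.toFun b = j.toFun (some (ULift.up false))
        · rw [if_pos c2]
          rw [← e2, c2, hpj]
        · rw [if_neg c2]
          by_cases c3 : p.toFun (d'.toFun b) = some PUnit.unit
          · rw [if_pos c3]
            rw [← e2, c3]
            rfl
          · rw [if_neg c3]
            rw [← e2]
            show (none : Option PUnit.{u+1}) = p.toFun (d'.toFun b)
            cases hcc : p.toFun (d'.toFun b) with
            | none => rfl
            | some u => cases u; exact absurd hcc c3

end PWFS

namespace PWFS
open Classical

lemma D_self {X Y : Pointed.{u}} (r : X ⟶ Y) (h : HasLiftingProperty r r) :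
    Function.Bijective r.toFun := by
  have sq : CommSq (𝟙 X) r r (𝟙 Y) := ⟨by simp⟩
  obtain ⟨⟨d, h1, h2⟩⟩ := (h.sq_hasLift sq).exists_lift
  exact Function.bijective_iff_has_inverse.2
    ⟨d.toFun, fun a => elem h1 a, fun b => elem h2 b⟩

lemma alpha_inj : Function.Injective (αm.{u}).toFun := fun a a' _ => by
  cases a; cases a'; rfl

lemma alpha_injstar : ∀ a, (αm.{u}).toFun a = two.point → a = pt.point := fun a _ => by
  cases a; rfl

lemma alpha_injne : ∀ a a', (αm.{u}).toFun a ≠ two.point → (αm.{u}).toFun a' ≠ two.point →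
    (αm.{u}).toFun a = (αm.{u}).toFun a' → a = a' := fun a a' _ _ _ => by
  cases a; cases a'; rfl

lemma beta_surj : Function.Surjective (βm.{u}).toFun := fun b => ⟨none, by cases b; rfl⟩

lemma beta_injne : ∀ a a', (βm.{u}).toFun a ≠ pt.point → (βm.{u}).toFun a' ≠ pt.point →
    (βm.{u}).toFun a = (βm.{u}).toFun a' → a = a' := fun a a' ha _ _ =>
  absurd rfl ha

lemma beta_not_inj : ¬ Function.Injective (βm.{u}).toFun := fun h =>
  by cases (h (show (βm.{u}).toFun (some PUnit.unit) = βm.toFun none from rfl))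

lemma gamma_surj : Function.Surjective (γm.{u}).toFun := by
  intro b
  cases b with
  | none => exact ⟨none, rfl⟩
  | some u => exact ⟨some (ULift.up true), by cases u; rfl⟩

lemma gamma_injstar : ∀ x, (γm.{u}).toFun x = two.point → x = three.point := by
  intro x hx
  cases x with
  | none => rfl
  | some b => cases hx

lemma mp_ext {L M : MorphismProperty Pointed.{u}}
    (h : ∀ (X Y : Pointed.{u}) (f : X ⟶ Y), L f ↔ M f) : L = M := by
  funext X Y f
  exact propext (h X Y f)

end PWFS

namespace PWFS
open Classical

lemma wfs1 : IsWFS pAny.{u} pBij.{u} := by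
  refine ⟨?_, ?_, ?_⟩
  · intro A B f
    exact ⟨B, f, 𝟙 B, trivial, Function.bijective_id, Category.comp_id f⟩
  · intro A B l
    constructor
    · intro _ X Y r hr
      exact hlp_bij_right l r hr
    · intro _
      trivial
  · intro X Y r
    constructor
    · intro hr A B l _
      exact hlp_bij_right l r hr
    · intro hh
      exact D_self r (hh r trivial)

lemma wfs6 : IsWFS pBij.{u} pAny.{u} := by
  refine ⟨?_, ?_, ?_⟩
  · intro A B f
    exact ⟨A, 𝟙 A, f, Function.bijective_id, trivial, Category.id_comp f⟩
  · intro A B l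
    constructor
    · intro hl X Y r _
      exact hlp_bij_left l r hl
    · intro hh
      exact D_self l (hh l trivial)
  · intro X Y r
    constructor
    · intro _ A B l hl
      exact hlp_bij_left l r hl
    · intro _
      trivial

lemma wfs3 : IsWFS pSurj.{u} pInj.{u} := by
  refine ⟨?_, ?_, ?_⟩
  · intro A B f
    obtain ⟨E, l, r, h1, h2, h3⟩ := fac_surj_inj f
    exact ⟨E, l, r, h1, h2, h3⟩
  · intro A B l
    constructor
    · intro hl X Y r hr
      exact hlp_surj_inj l r hl hr
    · intro hh
      exact D_l_alpha l (hh αm alpha_inj)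
  · intro X Y r
    constructor
    · intro hr A B l hl
      exact hlp_surj_inj l r hl hr
    · intro hh
      exact D_gamma_r r (hh γm gamma_surj)

lemma wfs4 : IsWFS pInj.{u} pSurj.{u} := by
  refine ⟨?_, ?_, ?_⟩
  · intro A B f
    obtain ⟨E, l, r, h1, h2, h3⟩ := fac_inj_surj f
    exact ⟨E, l, r, h1, h2, h3⟩
  · intro A B l
    constructor
    · intro hl X Y r hr
      exact hlp_inj_surj l r hl hr
    · intro hh
      exact D_l_beta l (hh βm beta_surj)
  · intro X Y r
    constructor
    · intro hr A B l hl
      exact hlp_inj_surj l r hl hr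
    · intro hh
      exact D_alpha_r r (hh αm alpha_inj)

lemma wfs2 : IsWFS pInjNeStar.{u} (fun X Y f => pSurj.{u} f ∧ pInjStar.{u} f) := by
  refine ⟨?_, ?_, ?_⟩
  · intro A B f
    obtain ⟨E, l, r, h1, h2, h3⟩ := fac_ins_ssi f
    exact ⟨E, l, r, h1, h2, h3⟩
  · intro A B l
    constructor
    · intro hl X Y r hr
      exact hlp_ins_ssi l r hl hr.1 hr.2
    · intro hh
      exact D_l_gamma l (hh γm ⟨gamma_surj, gamma_injstar⟩)
  · intro X Y r
    constructor
    · intro hr A B l hl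
      exact hlp_ins_ssi l r hl hr.1 hr.2
    · intro hh
      exact ⟨D_alpha_r r (hh αm alpha_injne), D_beta_r r (hh βm beta_injne)⟩

lemma wfs5 : IsWFS (fun X Y f => pSurj.{u} f ∧ pInjNeStar.{u} f) pInjStar.{u} := by
  refine ⟨?_, ?_, ?_⟩
  · intro A B f
    obtain ⟨E, l, r, h1, h2, h3⟩ := fac_ssn_is f
    exact ⟨E, l, r, h1, h2, h3⟩
  · intro A B l
    constructor
    · intro hl X Y r hr
      exact hlp_ssn_is l r hl.1 hl.2 hr
    · intro hh
      exact ⟨D_l_alpha l (hh αm alpha_injstar), D_l_gamma l (hh γm gamma_injstar)⟩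
  · intro X Y r
    constructor
    · intro hr A B l hl
      exact hlp_ssn_is l r hl.1 hl.2 hr
    · intro hh
      exact D_beta_r r (hh βm ⟨beta_surj, beta_injne⟩)

end PWFS


end

open PWFS

/-- **The six weak factorization systems on the category of pointed sets
(Goodwillie).** -/
theorem pointed_wfs_classification (L R : MorphismProperty Pointed.{u}) :
    IsWFS L R ↔
      ((L = pAny ∧ R = pBij) ∨
       (L = pInjNeStar ∧ R = (fun X Y f => pSurj f ∧ pInjStar f)) ∨
       (L = pSurj ∧ R = pInj) ∨
       (L = pInj ∧ R = pSurj) ∨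
       (L = (fun X Y f => pSurj f ∧ pInjNeStar f) ∧ R = pInjStar) ∨
       (L = pBij ∧ R = pAny)) := by
  constructor
  · intro h
    have ha := dich_alpha h
    have hb := dich_beta h
    have hc := dich_gamma h
    obtain ⟨hfac, hL, hR⟩ := h
    rcases hc with hc | hc
    · -- γ ∈ L
      rcases hb with hb | hb
      · rcases ha with ha | ha
        · -- LLL : (pAny, pBij)
          left
          have hRbij : ∀ {X Y : Pointed.{u}} (r : X ⟶ Y), R r → pBij r := by
            intro X Y r hr
            exact ⟨D_gamma_r r ((hL γm).1 hc r hr), D_alpha_r r ((hL αm).1 ha r hr)⟩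
          constructor
          · apply mp_ext; intro X Y f
            refine ⟨fun _ => trivial, fun _ => ?_⟩
            exact (hL f).2 (fun r hr => hlp_bij_right f r (hRbij r hr))
          · apply mp_ext; intro X Y r
            refine ⟨fun hr => hRbij r hr, fun hr => ?_⟩
            exact (hR r).2 (fun l _ => hlp_bij_right l r hr)
        · -- RLL : (pSurj, pInj)
          right; right; left
          constructor
          · apply mp_ext; intro A B l
            constructor
            · intro hl
              exact D_l_alpha l ((hR αm).1 ha l hl)
            · intro hl
              exact (hL l).2 (fun r hr => hlp_surj_inj l r hl (D_gamma_r r ((hL γm).1 hc r hr)))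
          · apply mp_ext; intro X Y r
            constructor
            · intro hr
              exact D_gamma_r r ((hL γm).1 hc r hr)
            · intro hr
              exact (hR r).2 (fun l hl => hlp_surj_inj l r (D_l_alpha l ((hR αm).1 ha l hl)) hr)
      · -- γ ∈ L, β ∈ R : contradiction
        exact absurd (D_gamma_r βm ((hL γm).1 hc βm hb)) beta_not_inj
    · -- γ ∈ R
      rcases hb with hb | hb
      · rcases ha with ha | ha
        · -- LLR : (pInjNeStar, pSurj ∧ pInjStar)
          right; left
          constructor
          · apply mp_ext; intro A B l
            constructor
            · intro hl
              exact D_l_gamma l ((hR γm).1 hc l hl)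
            · intro hl
              exact (hL l).2 (fun r hr => hlp_ins_ssi l r hl
                (D_alpha_r r ((hL αm).1 ha r hr)) (D_beta_r r ((hL βm).1 hb r hr)))
          · apply mp_ext; intro X Y r
            constructor
            · intro hr
              exact ⟨D_alpha_r r ((hL αm).1 ha r hr), D_beta_r r ((hL βm).1 hb r hr)⟩
            · intro hr
              exact (hR r).2 (fun l hl => hlp_ins_ssi l r
                (D_l_gamma l ((hR γm).1 hc l hl)) hr.1 hr.2)
        · -- RLR : (pSurj ∧ pInjNeStar, pInjStar)
          right; right; right; right; left
          constructor
          · apply mp_ext; intro A B l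
            constructor
            · intro hl
              exact ⟨D_l_alpha l ((hR αm).1 ha l hl), D_l_gamma l ((hR γm).1 hc l hl)⟩
            · intro hl
              exact (hL l).2 (fun r hr => hlp_ssn_is l r hl.1 hl.2
                (D_beta_r r ((hL βm).1 hb r hr)))
          · apply mp_ext; intro X Y r
            constructor
            · intro hr
              exact D_beta_r r ((hL βm).1 hb r hr)
            · intro hr
              exact (hR r).2 (fun l hl => hlp_ssn_is l r
                (D_l_alpha l ((hR αm).1 ha l hl)) (D_l_gamma l ((hR γm).1 hc l hl)) hr)
      · rcases ha with ha | ha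
        · -- LRR : (pInj, pSurj)
          right; right; right; left
          constructor
          · apply mp_ext; intro A B l
            constructor
            · intro hl
              exact D_l_beta l ((hR βm).1 hb l hl)
            · intro hl
              exact (hL l).2 (fun r hr => hlp_inj_surj l r hl (D_alpha_r r ((hL αm).1 ha r hr)))
          · apply mp_ext; intro X Y r
            constructor
            · intro hr
              exact D_alpha_r r ((hL αm).1 ha r hr)
            · intro hr
              exact (hR r).2 (fun l hl => hlp_inj_surj l r (D_l_beta l ((hR βm).1 hb l hl)) hr)
        · -- RRR : (pBij, pAny)
          right; right; right; right; right
          have hLbij : ∀ {A B : Pointed.{u}} (l : A ⟶ B), L l → pBij l := by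
            intro A B l hl
            exact ⟨D_l_beta l ((hR βm).1 hb l hl), D_l_alpha l ((hR αm).1 ha l hl)⟩
          constructor
          · apply mp_ext; intro A B l
            refine ⟨fun hl => hLbij l hl, fun hl => ?_⟩
            exact (hL l).2 (fun r _ => hlp_bij_left l r hl)
          · apply mp_ext; intro X Y r
            refine ⟨fun _ => trivial, fun _ => ?_⟩
            exact (hR r).2 (fun l hl => hlp_bij_left l r (hLbij l hl))
  · rintro (⟨h1, h2⟩ | ⟨h1, h2⟩ | ⟨h1, h2⟩ | ⟨h1, h2⟩ | ⟨h1, h2⟩ | ⟨h1, h2⟩) <;> subst h1 <;>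
      subst h2
    · exact wfs1
    · exact wfs2
    · exact wfs3
    · exact wfs4
    · exact wfs5
    · exact wfs6
end

section
/- There are precisely seven model structures on the category of pointed sets: a triple (C, F, W) of classes of pointed maps is a model structure if and only if it equals one of: (1) (any, any, bij); (2) (any, bij, any); (3) (bij, any, any); (4) (inj, surj, any); (5) (surj, inj, any); (6) (surj ∩ inj_{≠⋆}, inj_⋆, any); (7) (inj_{≠⋆}, surj ∩ inj_⋆, any), where 'any' denotes all pointed maps. -/
universe u

open CategoryTheory

/-!
The maps `unitToTwo : * → {*, 1}`, `toUnit two : {*, 1} → *` and `threeToTwo : {*, 1, 2} → {*, 1}`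
are test maps: a lifting problem against one of them forces, on the other leg, surjectivity,
injectivity (at the basepoint) or injectivity (away from the basepoint) respectively. Which test
maps lie in the left class of a weak factorization system pins it down as one of six.

For a model structure `(C, F, W)`: if `toUnit two` is a weak equivalence, it is a trivial
cofibration or a trivial fibration, that class then contains every `toUnit X`, and
`f ≫ toUnit Y = toUnit X` with 2-out-of-3 makes every map a weak equivalence, so `(C, F)` is one
of the six systems. Otherwise neither `toUnit two` nor `unitToTwo` is a trivial cofibration, so
trivial cofibrations are bijections and `F` is everything. Then `W = F ∩ W` is the right class of
`(C, W)`; it misses `unitToTwo`, hence consists of surjections, and 2-out-of-3 applied to pointed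
sections forces `W` to be the bijections.
-/

section

variable {𝒞 : Type*} [Category 𝒞] {L R L' R' : MorphismProperty 𝒞}

lemma IsWFS.intro
    (fac : ∀ {A B : 𝒞} (f : A ⟶ B), ∃ (E : 𝒞) (l : A ⟶ E) (r : E ⟶ B), L l ∧ R r ∧ l ≫ r = f)
    (lift : ∀ {A B X Y : 𝒞} (l : A ⟶ B) (r : X ⟶ Y), L l → R r → HasLiftingProperty l r)
    (left : ∀ {A B : 𝒞} (l : A ⟶ B),
      (∀ {X Y : 𝒞} (r : X ⟶ Y), R r → HasLiftingProperty l r) → L l)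
    (right : ∀ {X Y : 𝒞} (r : X ⟶ Y),
      (∀ {A B : 𝒞} (l : A ⟶ B), L l → HasLiftingProperty l r) → R r) :
    IsWFS L R :=
  ⟨fac, fun l => ⟨fun hl _ _ r hr => lift l r hl hr, left l⟩,
    fun r => ⟨fun hr _ _ l hl => lift l r hl hr, right r⟩⟩

lemma IsWFS.hasLiftingProperty (h : IsWFS L R) {A B X Y : 𝒞} {l : A ⟶ B} {r : X ⟶ Y}
    (hl : L l) (hr : R r) : HasLiftingProperty l r :=
  (h.2.1 l).1 hl r hr

lemma IsWFS.left_of_isIso (h : IsWFS L R) {A B : 𝒞} (l : A ⟶ B) [IsIso l] : L l :=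
  (h.2.1 l).2 fun _ _ => inferInstance

lemma IsWFS.exists_not_hasLiftingProperty_of_not_left (h : IsWFS L R) {A B : 𝒞} {l : A ⟶ B}
    (hl : ¬ L l) : ∃ (X Y : 𝒞) (r : X ⟶ Y), R r ∧ ¬ HasLiftingProperty l r := by
  by_contra! H
  exact hl ((h.2.1 l).2 fun r hr => H _ _ r hr)

lemma IsWFS.exists_not_hasLiftingProperty_of_not_right (h : IsWFS L R) {X Y : 𝒞} {r : X ⟶ Y}
    (hr : ¬ R r) : ∃ (A B : 𝒞) (l : A ⟶ B), L l ∧ ¬ HasLiftingProperty l r := by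
  by_contra! H
  exact hr ((h.2.2 r).2 fun l hl => H _ _ l hl)

lemma IsWFS.eq_of_le (h : IsWFS L R) (h' : IsWFS L' R') (hL : L ≤ L') (hR : R ≤ R') :
    L = L' ∧ R = R' :=
  ⟨le_antisymm hL fun _ _ l hl => (h.2.1 l).2 fun r hr => h'.hasLiftingProperty hl (hR r hr),
    le_antisymm hR fun _ _ r hr => (h.2.2 r).2 fun l hl => h'.hasLiftingProperty (hL l hl) hr⟩

variable {W : MorphismProperty 𝒞}

lemma TwoOutOfThree.of_precomp (hW : TwoOutOfThree W) {A B D : 𝒞} {f : A ⟶ B} {g : B ⟶ D}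
    (hf : W f) (hfg : W (f ≫ g)) : W g :=
  (hW f g).2.1 hf hfg

lemma TwoOutOfThree.of_postcomp (hW : TwoOutOfThree W) {A B D : 𝒞} {f : A ⟶ B} {g : B ⟶ D}
    (hg : W g) (hfg : W (f ≫ g)) : W f :=
  (hW f g).2.2 hg hfg

end

namespace Pointed

variable {A B X Y : Pointed.{u}}

lemma hasLiftingProperty_iff (i : A ⟶ B) (p : X ⟶ Y) :
    HasLiftingProperty i p ↔ ∀ (f : A ⟶ X) (g : B ⟶ Y),
      (∀ a, p.toFun (f.toFun a) = g.toFun (i.toFun a)) →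
      ∃ d : B ⟶ X, (∀ a, d.toFun (i.toFun a) = f.toFun a) ∧
        ∀ b, p.toFun (d.toFun b) = g.toFun b := by
  simp only [← funext_iff, ← Function.comp_def]
  constructor
  · intro _ f g w
    have sq : CommSq f i p g := ⟨Hom.ext w⟩
    exact ⟨sq.lift, congrArg Hom.toFun sq.fac_left, congrArg Hom.toFun sq.fac_right⟩
  · intro H
    refine ⟨fun {f g} sq => ?_⟩
    obtain ⟨d, hd₁, hd₂⟩ := H f g (congrArg Hom.toFun sq.w)
    exact CommSq.HasLift.mk' ⟨d, Hom.ext hd₁, Hom.ext hd₂⟩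

open Classical in
noncomputable def single (a : A) (ha : a ≠ A.point) (x : X) : A ⟶ X :=
  ⟨fun a' => if a' = a then x else X.point, if_neg ha.symm⟩

@[simp]
lemma single_apply_self (a : A) (ha : a ≠ A.point) (x : X) : (single a ha x).toFun a = x :=
  if_pos rfl

lemma single_apply_of_ne {a a' : A} (ha : a ≠ A.point) (x : X) (h : a' ≠ a) :
    (single a ha x).toFun a' = X.point :=
  if_neg h

lemma injStar_of_injective {f : A ⟶ B} (hf : Function.Injective f.toFun) : pInjStar f :=
  fun _ ha => hf (ha.trans f.map_point.symm)

lemma injNeStar_of_injective {f : A ⟶ B} (hf : Function.Injective f.toFun) : pInjNeStar f :=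
  fun _ _ _ _ h => hf h

lemma isIso_of_bijective {f : A ⟶ B} (hf : Function.Bijective f.toFun) : IsIso f :=
  (Iso.mk (Equiv.ofBijective _ hf) f.map_point).isIso_hom

lemma hasLiftingProperty_of_bijective_left {i : A ⟶ B} (p : X ⟶ Y)
    (hi : Function.Bijective i.toFun) :
    HasLiftingProperty i p :=
  have := isIso_of_bijective hi
  inferInstance

lemma hasLiftingProperty_of_bijective_right (i : A ⟶ B) {p : X ⟶ Y}
    (hp : Function.Bijective p.toFun) :
    HasLiftingProperty i p :=
  have := isIso_of_bijective hp
  inferInstance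

lemma surjective_or_surjective_of_hasLiftingProperty {i : A ⟶ B} {p : X ⟶ Y}
    (h : HasLiftingProperty i p) : Function.Surjective i.toFun ∨ Function.Surjective p.toFun := by
  refine or_iff_not_imp_left.2 fun hi y => ?_
  obtain ⟨b, hb⟩ : ∃ b, ∀ a, i.toFun a ≠ b := by simpa [Function.Surjective] using hi
  have hb' : b ≠ B.point := fun h => hb A.point (i.map_point.trans h.symm)
  by_contra! hy
  obtain ⟨d, -, hd⟩ := (hasLiftingProperty_iff i p).1 h ⟨fun _ => X.point, rfl⟩ (single b hb' y)
    fun a => by rw [single_apply_of_ne hb' y (hb a)]; exact p.map_point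
  exact hy (d.toFun b) ((hd b).trans (single_apply_self b hb' y))

lemma injective_or_injStar_of_hasLiftingProperty {i : A ⟶ B} {p : X ⟶ Y}
    (h : HasLiftingProperty i p) : Function.Injective i.toFun ∨ pInjStar p := by
  refine or_iff_not_imp_left.2 fun hi x hx => ?_
  obtain ⟨a, a', ha, hne, heq⟩ : ∃ a a', a ≠ A.point ∧ a' ≠ a ∧ i.toFun a = i.toFun a' := by
    obtain ⟨a, a', heq, hne⟩ : ∃ a a', i.toFun a = i.toFun a' ∧ a ≠ a' := by
      simpa [Function.Injective] using hi
    by_cases ha : a = A.point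
    · exact ⟨a', a, fun h => hne (ha.trans h.symm), hne, heq.symm⟩
    · exact ⟨a, a', ha, Ne.symm hne, heq⟩
  obtain ⟨d, hd, -⟩ := (hasLiftingProperty_iff i p).1 h (single a ha x) ⟨fun _ => Y.point, rfl⟩
    fun a'' => by
      by_cases h : a'' = a
      · rw [h, single_apply_self]; exact hx
      · rw [single_apply_of_ne ha x h]; exact p.map_point
  rw [← single_apply_self a ha x, ← hd, heq, hd, single_apply_of_ne ha x hne]

lemma injNeStar_or_injective_of_hasLiftingProperty {i : A ⟶ B} {p : X ⟶ Y}
    (h : HasLiftingProperty i p) : pInjNeStar i ∨ Function.Injective p.toFun := by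
  classical
  refine or_iff_not_imp_left.2 fun hi x x' hxx' => ?_
  obtain ⟨a, a', ha, hne, heq⟩ :
      ∃ a a', i.toFun a ≠ B.point ∧ a' ≠ a ∧ i.toFun a = i.toFun a' := by
    simp only [pInjNeStar, not_forall] at hi
    obtain ⟨a, a', ha, -, heq, hne⟩ := hi
    exact ⟨a, a', ha, Ne.symm hne, heq⟩
  let f : A ⟶ X := ⟨fun a'' => if i.toFun a'' = i.toFun a then (if a'' = a then x else x')
    else X.point, if_neg (by rw [i.map_point]; exact Ne.symm ha)⟩
  obtain ⟨d, hd, -⟩ := (hasLiftingProperty_iff i p).1 h f (single (i.toFun a) ha (p.toFun x))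
    fun a'' => by
      by_cases h : i.toFun a'' = i.toFun a
      · simp only [f, h, single_apply_self]
        split_ifs <;> simp [hxx']
      · simp only [f, if_neg h, single_apply_of_ne ha _ h, p.map_point]
  have hdx : d.toFun (i.toFun a) = x := (hd a).trans (by simp [f])
  have hdx' : d.toFun (i.toFun a') = x' := (hd a').trans (by simp [f, heq, hne])
  rw [← hdx, ← hdx', heq]

lemma hasLiftingProperty_of_injective_of_surjective {i : A ⟶ B} {p : X ⟶ Y}
    (hi : Function.Injective i.toFun) (hp : Function.Surjective p.toFun) :
    HasLiftingProperty i p := by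
  refine (hasLiftingProperty_iff i p).2 fun f g w => ?_
  let d := Function.extend i.toFun f.toFun (Function.surjInv hp ∘ g.toFun)
  have hd : ∀ a, d (i.toFun a) = f.toFun a := hi.extend_apply _ _
  refine ⟨⟨d, by rw [← i.map_point, hd, f.map_point]⟩, hd, fun b => ?_⟩
  by_cases hb : ∃ a, i.toFun a = b
  · obtain ⟨a, rfl⟩ := hb
    exact (congrArg p.toFun (hd a)).trans (w a)
  · exact (congrArg p.toFun (Function.extend_apply' _ _ _ hb)).trans (Function.surjInv_eq hp _)

lemma hasLiftingProperty_of_surjective {i : A ⟶ B} (p : X ⟶ Y) (hi : Function.Surjective i.toFun)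
    (hfib : ∀ (f : A ⟶ X) (g : B ⟶ Y), (∀ a, p.toFun (f.toFun a) = g.toFun (i.toFun a)) →
      ∀ a a', i.toFun a = i.toFun a' → f.toFun a = f.toFun a') :
    HasLiftingProperty i p := by
  refine (hasLiftingProperty_iff i p).2 fun f g w => ?_
  have hs := Function.surjInv_eq hi
  refine ⟨⟨f.toFun ∘ Function.surjInv hi, ?_⟩, fun a => hfib f g w _ _ (hs _), fun b => ?_⟩
  · exact (hfib f g w _ A.point (by rw [hs, i.map_point])).trans f.map_point
  · exact (w _).trans (congrArg g.toFun (hs b))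

lemma hasLiftingProperty_of_surjective_of_injective {i : A ⟶ B} {p : X ⟶ Y}
    (hi : Function.Surjective i.toFun) (hp : Function.Injective p.toFun) :
    HasLiftingProperty i p :=
  hasLiftingProperty_of_surjective p hi fun f g w a a' h => hp (by rw [w, w, h])

lemma hasLiftingProperty_of_surjective_injNeStar_of_injStar {i : A ⟶ B} {p : X ⟶ Y}
    (hi : Function.Surjective i.toFun) (hi' : pInjNeStar i) (hp : pInjStar p) :
    HasLiftingProperty i p := by
  refine hasLiftingProperty_of_surjective p hi fun f g w a a' h => ?_
  by_cases ha : i.toFun a = B.point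
  · have hpt : ∀ a'', i.toFun a'' = B.point → f.toFun a'' = X.point := fun a'' h'' =>
      hp _ (by rw [w, h'', g.map_point])
    rw [hpt a ha, hpt a' (h ▸ ha)]
  · rw [hi' a a' ha (h ▸ ha) h]

lemma hasLiftingProperty_of_injNeStar_of_surjective_injStar {i : A ⟶ B} {p : X ⟶ Y}
    (hi : pInjNeStar i) (hp : Function.Surjective p.toFun) (hp' : pInjStar p) :
    HasLiftingProperty i p := by
  classical
  refine (hasLiftingProperty_iff i p).2 fun f g w => ?_
  let d : B → X := fun b => if g.toFun b = Y.point then X.point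
    else if h : ∃ a, i.toFun a = b then f.toFun h.choose else Function.surjInv hp (g.toFun b)
  refine ⟨⟨d, if_pos g.map_point⟩, fun a => ?_, fun b => ?_⟩
  · by_cases hg : g.toFun (i.toFun a) = Y.point
    · simp only [d, if_pos hg]
      exact (hp' _ ((w a).trans hg)).symm
    · have h : ∃ a', i.toFun a' = i.toFun a := ⟨a, rfl⟩
      have hia : i.toFun a ≠ B.point := fun hc => hg (by rw [hc, g.map_point])
      simp only [d, if_neg hg, dif_pos h]
      exact congrArg f.toFun (hi _ _ (by rw [h.choose_spec]; exact hia) hia h.choose_spec)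
  · by_cases hg : g.toFun b = Y.point
    · simp only [d, if_pos hg, p.map_point, hg]
    · by_cases h : ∃ a, i.toFun a = b
      · simp only [d, if_neg hg, dif_pos h, w, h.choose_spec]
      · simp only [d, if_neg hg, dif_neg h, Function.surjInv_eq hp]

abbrev unit : Pointed.{u} := of PUnit.unit

abbrev two : Pointed.{u} := of (none : Option PUnit)

abbrev three : Pointed.{u} := of (none : Option (ULift Bool))

def toUnit (X : Pointed.{u}) : X ⟶ unit := ⟨fun _ => PUnit.unit, rfl⟩

instance (X : Pointed.{u}) : Subsingleton (X ⟶ unit) := ⟨fun _ _ => Hom.ext (funext fun _ => rfl)⟩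

def unitToTwo : unit.{u} ⟶ two := ⟨fun _ => none, rfl⟩

def threeToTwo : three.{u} ⟶ two := ⟨Option.map fun _ => PUnit.unit, rfl⟩

lemma toUnit_surjective (X : Pointed.{u}) : Function.Surjective (toUnit X).toFun :=
  fun _ => ⟨X.point, rfl⟩

lemma toUnit_injNeStar (X : Pointed.{u}) : pInjNeStar (toUnit X) :=
  fun _ _ h _ _ => absurd rfl h

lemma toUnit_two_not_injective : ¬ Function.Injective (toUnit two.{u}).toFun :=
  fun h => nomatch h (a₁ := some PUnit.unit) (a₂ := none) rfl

lemma toUnit_two_not_injStar : ¬ pInjStar (toUnit two.{u}) :=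
  fun h => nomatch h (some PUnit.unit) rfl

lemma unitToTwo_injective : Function.Injective unitToTwo.{u}.toFun :=
  fun _ _ _ => rfl

lemma unitToTwo_not_surjective : ¬ Function.Surjective unitToTwo.{u}.toFun := fun h => by
  obtain ⟨_, h⟩ := h (some PUnit.unit)
  cases h

lemma threeToTwo_surjective : Function.Surjective threeToTwo.{u}.toFun
  | none => ⟨none, rfl⟩
  | some _ => ⟨some ⟨false⟩, rfl⟩

lemma threeToTwo_injStar : pInjStar threeToTwo.{u}
  | none, _ => rfl

lemma threeToTwo_not_injective : ¬ Function.Injective threeToTwo.{u}.toFun :=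
  fun h => nomatch h (a₁ := some ⟨false⟩) (a₂ := some ⟨true⟩) rfl

lemma threeToTwo_not_injNeStar : ¬ pInjNeStar threeToTwo.{u} :=
  fun h => nomatch h (some ⟨false⟩) (some ⟨true⟩) nofun nofun rfl

lemma surjective_of_unitToTwo_hasLiftingProperty {p : X ⟶ Y}
    (h : HasLiftingProperty unitToTwo p) : Function.Surjective p.toFun :=
  (surjective_or_surjective_of_hasLiftingProperty h).resolve_left unitToTwo_not_surjective

lemma surjective_of_hasLiftingProperty_unitToTwo {i : A ⟶ B}
    (h : HasLiftingProperty i unitToTwo) : Function.Surjective i.toFun :=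
  (surjective_or_surjective_of_hasLiftingProperty h).resolve_right unitToTwo_not_surjective

lemma injStar_of_toUnit_hasLiftingProperty {p : X ⟶ Y}
    (h : HasLiftingProperty (toUnit two) p) : pInjStar p :=
  (injective_or_injStar_of_hasLiftingProperty h).resolve_left toUnit_two_not_injective

lemma injective_of_hasLiftingProperty_toUnit {i : A ⟶ B}
    (h : HasLiftingProperty i (toUnit two)) : Function.Injective i.toFun :=
  (injective_or_injStar_of_hasLiftingProperty h).resolve_right toUnit_two_not_injStar

lemma injective_of_threeToTwo_hasLiftingProperty {p : X ⟶ Y}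
    (h : HasLiftingProperty threeToTwo p) : Function.Injective p.toFun :=
  (injNeStar_or_injective_of_hasLiftingProperty h).resolve_left threeToTwo_not_injNeStar

lemma injNeStar_of_hasLiftingProperty_threeToTwo {i : A ⟶ B}
    (h : HasLiftingProperty i threeToTwo) : pInjNeStar i :=
  (injNeStar_or_injective_of_hasLiftingProperty h).resolve_right threeToTwo_not_injective

lemma exists_injective_surjective_factorization (f : A ⟶ B) :
    ∃ (E : Pointed.{u}) (l : A ⟶ E) (r : E ⟶ B), pInj l ∧ pSurj r ∧ l ≫ r = f :=
  ⟨of (Sum.inl A.point : A ⊕ B), ⟨Sum.inl, rfl⟩, ⟨Sum.elim f.toFun id, f.map_point⟩,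
    Sum.inl_injective, fun b => ⟨Sum.inr b, rfl⟩, rfl⟩

lemma exists_surjective_injective_factorization (f : A ⟶ B) :
    ∃ (E : Pointed.{u}) (l : A ⟶ E) (r : E ⟶ B), pSurj l ∧ pInj r ∧ l ≫ r = f :=
  ⟨of (Set.rangeFactorization f.toFun A.point), ⟨Set.rangeFactorization f.toFun, rfl⟩,
    ⟨Subtype.val, f.map_point⟩, Set.rangeFactorization_surjective, Subtype.val_injective, rfl⟩

lemma exists_surjective_injNeStar_injStar_factorization (f : A ⟶ B) :
    ∃ (E : Pointed.{u}) (l : A ⟶ E) (r : E ⟶ B),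
      (pSurj ⊓ pInjNeStar) l ∧ pInjStar r ∧ l ≫ r = f := by
  classical
  let l : A → Option {a : A // f.toFun a ≠ B.point} :=
    fun a => if h : f.toFun a = B.point then none else some ⟨a, h⟩
  have hl : ∀ a, l a ≠ none → f.toFun a ≠ B.point := fun a h ha => h (dif_pos ha)
  refine ⟨of none, ⟨l, dif_pos f.map_point⟩, ⟨fun o => o.elim B.point (f.toFun ∘ Subtype.val), rfl⟩,
    ⟨?_, fun a a' ha ha' h => ?_⟩, ?_, Hom.ext (funext fun a => ?_)⟩
  · rintro (_ | ⟨a, ha⟩)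
    exacts [⟨A.point, dif_pos f.map_point⟩, ⟨a, dif_neg ha⟩]
  · simpa [l, hl a ha, hl a' ha'] using h
  · rintro (_ | ⟨a, ha⟩) h
    exacts [rfl, absurd h ha]
  · by_cases ha : f.toFun a = B.point <;> simp [l, ha]

lemma exists_injNeStar_surjective_injStar_factorization (f : A ⟶ B) :
    ∃ (E : Pointed.{u}) (l : A ⟶ E) (r : E ⟶ B),
      pInjNeStar l ∧ (pSurj ⊓ pInjStar) r ∧ l ≫ r = f := by
  classical
  let l : A → {a : A // f.toFun a ≠ B.point} ⊕ B :=
    fun a => if h : f.toFun a = B.point then Sum.inr B.point else Sum.inl ⟨a, h⟩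
  have hl : ∀ a, l a ≠ Sum.inr B.point → f.toFun a ≠ B.point := fun a h ha => h (dif_pos ha)
  refine ⟨of (Sum.inr B.point), ⟨l, dif_pos f.map_point⟩,
    ⟨Sum.elim (f.toFun ∘ Subtype.val) id, rfl⟩, fun a a' ha ha' h => ?_,
    ⟨fun b => ⟨Sum.inr b, rfl⟩, ?_⟩, Hom.ext (funext fun a => ?_)⟩
  · simpa [l, hl a ha, hl a' ha'] using h
  · rintro (⟨a, ha⟩ | b) h
    exacts [absurd h ha, congrArg Sum.inr h]
  · by_cases ha : f.toFun a = B.point <;> simp [l, ha]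

lemma exists_section_of_surjective {w : A ⟶ B}
    (hw : Function.Surjective w.toFun) : ∃ s : B ⟶ A, s ≫ w = 𝟙 B := by
  classical
  refine ⟨⟨Function.update (Function.surjInv hw) B.point A.point, Function.update_self ..⟩,
    Hom.ext (funext fun b => ?_)⟩
  by_cases hb : b = B.point
  · subst hb
    simp [w.map_point]
  · simp [Function.update_of_ne hb, Function.surjInv_eq hw]

end Pointed

open Pointed

lemma isWFS_pAny_pBij : IsWFS pAny.{u} pBij :=
  IsWFS.intro (fun f => ⟨_, f, 𝟙 _, trivial, Function.bijective_id, Category.comp_id f⟩)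
    (fun l _ _ hr => hasLiftingProperty_of_bijective_right l hr) (fun _ _ => trivial)
    fun _ hr => ⟨injective_of_threeToTwo_hasLiftingProperty (hr _ trivial),
      surjective_of_unitToTwo_hasLiftingProperty (hr _ trivial)⟩

lemma isWFS_pBij_pAny : IsWFS pBij.{u} pAny :=
  IsWFS.intro (fun f => ⟨_, 𝟙 _, f, Function.bijective_id, trivial, Category.id_comp f⟩)
    (fun _ r hl _ => hasLiftingProperty_of_bijective_left r hl)
    (fun _ hl => ⟨injective_of_hasLiftingProperty_toUnit (hl _ trivial),
      surjective_of_hasLiftingProperty_unitToTwo (hl _ trivial)⟩)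
    fun _ _ => trivial

lemma isWFS_pInj_pSurj : IsWFS pInj.{u} pSurj :=
  IsWFS.intro exists_injective_surjective_factorization
    (fun _ _ => hasLiftingProperty_of_injective_of_surjective)
    (fun _ hl => injective_of_hasLiftingProperty_toUnit (hl _ (toUnit_surjective two)))
    fun _ hr => surjective_of_unitToTwo_hasLiftingProperty (hr _ unitToTwo_injective)

lemma isWFS_pSurj_pInj : IsWFS pSurj.{u} pInj :=
  IsWFS.intro exists_surjective_injective_factorization
    (fun _ _ => hasLiftingProperty_of_surjective_of_injective)
    (fun _ hl => surjective_of_hasLiftingProperty_unitToTwo (hl _ unitToTwo_injective))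
    fun _ hr => injective_of_threeToTwo_hasLiftingProperty (hr _ threeToTwo_surjective)

lemma isWFS_pSurj_inf_pInjNeStar_pInjStar : IsWFS (pSurj.{u} ⊓ pInjNeStar) pInjStar :=
  IsWFS.intro exists_surjective_injNeStar_injStar_factorization
    (fun _ _ hl hr => hasLiftingProperty_of_surjective_injNeStar_of_injStar hl.1 hl.2 hr)
    (fun _ hl => ⟨surjective_of_hasLiftingProperty_unitToTwo
        (hl _ (injStar_of_injective unitToTwo_injective)),
      injNeStar_of_hasLiftingProperty_threeToTwo (hl _ threeToTwo_injStar)⟩)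
    fun _ hr => injStar_of_toUnit_hasLiftingProperty
      (hr _ ⟨toUnit_surjective two, toUnit_injNeStar two⟩)

lemma isWFS_pInjNeStar_pSurj_inf_pInjStar : IsWFS pInjNeStar.{u} (pSurj ⊓ pInjStar) :=
  IsWFS.intro exists_injNeStar_surjective_injStar_factorization
    (fun _ _ hl hr => hasLiftingProperty_of_injNeStar_of_surjective_injStar hl hr.1 hr.2)
    (fun _ hl => injNeStar_of_hasLiftingProperty_threeToTwo
      (hl _ ⟨threeToTwo_surjective, threeToTwo_injStar⟩))
    fun _ hr => ⟨surjective_of_unitToTwo_hasLiftingProperty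
        (hr _ (injNeStar_of_injective unitToTwo_injective)),
      injStar_of_toUnit_hasLiftingProperty (hr _ (toUnit_injNeStar two))⟩

namespace IsWFS

variable {L R : MorphismProperty Pointed.{u}}

lemma left_le_pSurj_of_not_left (h : IsWFS L R) (he : ¬ L unitToTwo) : L ≤ pSurj := by
  obtain ⟨X, Y, r, hr, hlift⟩ := h.exists_not_hasLiftingProperty_of_not_left he
  have hr' : ¬ pSurj r := fun hs =>
    hlift (hasLiftingProperty_of_injective_of_surjective unitToTwo_injective hs)
  exact fun _ _ l hl =>
    (surjective_or_surjective_of_hasLiftingProperty (h.hasLiftingProperty hl hr)).resolve_right hr'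

lemma right_le_pSurj_of_not_right (h : IsWFS L R) (he : ¬ R unitToTwo) : R ≤ pSurj := by
  obtain ⟨A, B, l, hl, hlift⟩ := h.exists_not_hasLiftingProperty_of_not_right he
  have hl' : ¬ pSurj l := fun hs =>
    hlift (hasLiftingProperty_of_surjective_of_injective hs unitToTwo_injective)
  exact fun _ _ r hr =>
    (surjective_or_surjective_of_hasLiftingProperty (h.hasLiftingProperty hl hr)).resolve_left hl'

lemma right_le_pSurj_of_left (h : IsWFS L R) (he : L unitToTwo) : R ≤ pSurj :=
  fun _ _ _ hr => surjective_of_unitToTwo_hasLiftingProperty (h.hasLiftingProperty he hr)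

lemma left_le_pInj_of_not_left (h : IsWFS L R) (hp : ¬ L (toUnit two)) : L ≤ pInj := by
  obtain ⟨X, Y, r, hr, hlift⟩ := h.exists_not_hasLiftingProperty_of_not_left hp
  have hr' : ¬ pInjStar r := fun hs => hlift (hasLiftingProperty_of_surjective_injNeStar_of_injStar
    (toUnit_surjective two) (toUnit_injNeStar two) hs)
  exact fun _ _ l hl =>
    (injective_or_injStar_of_hasLiftingProperty (h.hasLiftingProperty hl hr)).resolve_right hr'

lemma right_le_pInjStar_of_left (h : IsWFS L R) (hp : L (toUnit two)) : R ≤ pInjStar :=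
  fun _ _ _ hr => injStar_of_toUnit_hasLiftingProperty (h.hasLiftingProperty hp hr)

lemma left_le_pInjNeStar_of_not_left (h : IsWFS L R) (hm : ¬ L threeToTwo) :
    L ≤ pInjNeStar := by
  obtain ⟨X, Y, r, hr, hlift⟩ := h.exists_not_hasLiftingProperty_of_not_left hm
  have hr' : ¬ pInj r := fun hi =>
    hlift (hasLiftingProperty_of_surjective_of_injective threeToTwo_surjective hi)
  exact fun _ _ l hl =>
    (injNeStar_or_injective_of_hasLiftingProperty (h.hasLiftingProperty hl hr)).resolve_right hr'

lemma right_le_pInj_of_left (h : IsWFS L R) (hm : L threeToTwo) : R ≤ pInj :=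
  fun _ _ _ hr => injective_of_threeToTwo_hasLiftingProperty (h.hasLiftingProperty hm hr)

lemma left_toUnit_of_left (h : IsWFS L R) (hp : L (toUnit two)) (X : Pointed.{u}) :
    L (toUnit X) :=
  (h.2.1 _).2 fun _ hr => hasLiftingProperty_of_surjective_injNeStar_of_injStar
    (toUnit_surjective X) (toUnit_injNeStar X) (h.right_le_pInjStar_of_left hp _ hr)

lemma right_toUnit_of_not_left (h : IsWFS L R) (hp : ¬ L (toUnit two)) (X : Pointed.{u}) :
    R (toUnit X) :=
  (h.2.2 _).2 fun _ hl => hasLiftingProperty_of_injective_of_surjective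
    (h.left_le_pInj_of_not_left hp _ hl) (toUnit_surjective X)

end IsWFS

theorem isWFS_iff {L R : MorphismProperty Pointed.{u}} :
    IsWFS L R ↔ (L = pAny ∧ R = pBij) ∨ (L = pBij ∧ R = pAny) ∨ (L = pInj ∧ R = pSurj) ∨
      (L = pSurj ∧ R = pInj) ∨ (L = (fun _ _ f => pSurj f ∧ pInjNeStar f) ∧ R = pInjStar) ∨
      (L = pInjNeStar ∧ R = (fun _ _ f => pSurj f ∧ pInjStar f)) := by
  refine ⟨fun h => ?_, ?_⟩
  · by_cases hp : L (toUnit two)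
    · by_cases hm : L threeToTwo
      · have hRi := h.right_le_pInj_of_left hm
        by_cases he : L unitToTwo
        · exact Or.inl (h.eq_of_le isWFS_pAny_pBij (fun _ _ _ _ => trivial)
            fun _ _ r hr => ⟨hRi r hr, h.right_le_pSurj_of_left he r hr⟩)
        · exact Or.inr <| Or.inr <| Or.inr <| Or.inl <|
            h.eq_of_le isWFS_pSurj_pInj (h.left_le_pSurj_of_not_left he) hRi
      · have hRp := h.right_le_pInjStar_of_left hp
        have hLi := h.left_le_pInjNeStar_of_not_left hm
        by_cases he : L unitToTwo
        · exact Or.inr <| Or.inr <| Or.inr <| Or.inr <| Or.inr <|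
            h.eq_of_le isWFS_pInjNeStar_pSurj_inf_pInjStar hLi
              fun _ _ r hr => ⟨h.right_le_pSurj_of_left he r hr, hRp r hr⟩
        · exact Or.inr <| Or.inr <| Or.inr <| Or.inr <| Or.inl <|
            h.eq_of_le isWFS_pSurj_inf_pInjNeStar_pInjStar
              (fun _ _ l hl => ⟨h.left_le_pSurj_of_not_left he l hl, hLi l hl⟩) hRp
    · have hLi := h.left_le_pInj_of_not_left hp
      by_cases he : L unitToTwo
      · exact Or.inr <| Or.inr <| Or.inl <|
          h.eq_of_le isWFS_pInj_pSurj hLi (h.right_le_pSurj_of_left he)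
      · exact Or.inr <| Or.inl <| h.eq_of_le isWFS_pBij_pAny
          (fun _ _ l hl => ⟨hLi l hl, h.left_le_pSurj_of_not_left he l hl⟩) fun _ _ _ _ => trivial
  · rintro (⟨rfl, rfl⟩ | ⟨rfl, rfl⟩ | ⟨rfl, rfl⟩ | ⟨rfl, rfl⟩ | ⟨rfl, rfl⟩ | ⟨rfl, rfl⟩)
    exacts [isWFS_pAny_pBij, isWFS_pBij_pAny, isWFS_pInj_pSurj, isWFS_pSurj_pInj,
      isWFS_pSurj_inf_pInjNeStar_pInjStar, isWFS_pInjNeStar_pSurj_inf_pInjStar]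

lemma interMP_pAny_left (P : MorphismProperty Pointed.{u}) : interMP pAny P = P :=
  MorphismProperty.ext _ _ fun _ _ _ => (true_and _).to_iff

lemma interMP_pAny_right (P : MorphismProperty Pointed.{u}) : interMP P pAny = P :=
  MorphismProperty.ext _ _ fun _ _ _ => (and_true _).to_iff

lemma twoOutOfThree_pAny : TwoOutOfThree pAny.{u} :=
  fun _ _ => ⟨fun _ _ => trivial, fun _ _ => trivial, fun _ _ => trivial⟩

lemma twoOutOfThree_pBij : TwoOutOfThree pBij.{u} := fun f g =>
  ⟨fun hf hg => hg.comp hf, fun hf hfg => (Function.Bijective.of_comp_iff g.toFun hf).1 hfg,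
    fun hg hfg => (Function.Bijective.of_comp_iff' hg f.toFun).1 hfg⟩

lemma TwoOutOfThree.le_pBij_of_le_pSurj {W : MorphismProperty Pointed.{u}} (hW : TwoOutOfThree W)
    (hid : ∀ X, W (𝟙 X)) (hs : W ≤ pSurj) : W ≤ pBij := by
  intro A B w hw
  obtain ⟨s, hsw⟩ := exists_section_of_surjective (hs w hw)
  have hs_surj : Function.Surjective s.toFun := hs s (hW.of_postcomp hw (hsw ▸ hid B))
  have hinv : Function.LeftInverse w.toFun s.toFun := fun b => congrArg (·.toFun b) hsw
  exact ⟨(hinv.rightInverse_of_surjective hs_surj).injective, hs w hw⟩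

namespace IsModelStructure

variable {C F W : MorphismProperty Pointed.{u}}

lemma twoOutOfThree (h : IsModelStructure C F W) : TwoOutOfThree W := h.1

lemma isWFS_trivCof_fib (h : IsModelStructure C F W) : IsWFS (interMP C W) F := h.2.1

lemma isWFS_cof_trivFib (h : IsModelStructure C F W) : IsWFS C (interMP F W) := h.2.2

lemma id_mem (h : IsModelStructure C F W) (X : Pointed.{u}) : W (𝟙 X) :=
  (h.isWFS_trivCof_fib.left_of_isIso (𝟙 X)).2

lemma eq_pAny_of_mem_toUnit (h : IsModelStructure C F W) (hp : W (toUnit two)) : W = pAny := by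
  have hW : ∀ X, W (toUnit X) := fun X => by
    by_cases hC : C (toUnit two)
    · exact (h.isWFS_trivCof_fib.left_toUnit_of_left ⟨hC, hp⟩ X).2
    · exact (h.isWFS_cof_trivFib.right_toUnit_of_not_left hC X).2
  refine MorphismProperty.ext _ _ fun X Y f => iff_true_intro ?_
  exact TwoOutOfThree.of_postcomp h.twoOutOfThree (hW Y)
    (Subsingleton.elim (toUnit X) (f ≫ toUnit Y) ▸ hW X)

lemma eq_of_not_mem_toUnit (h : IsModelStructure C F W) (hp : ¬ W (toUnit two)) :
    C = pAny ∧ F = pAny ∧ W = pBij := by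
  have he : ¬ W unitToTwo := fun he => hp (TwoOutOfThree.of_precomp h.twoOutOfThree he
    (Subsingleton.elim (𝟙 _) (unitToTwo ≫ toUnit two) ▸ h.id_mem _))
  have hL : interMP C W ≤ pBij := fun _ _ l hl =>
    ⟨h.isWFS_trivCof_fib.left_le_pInj_of_not_left (fun h' => hp h'.2) l hl,
      h.isWFS_trivCof_fib.left_le_pSurj_of_not_left (fun h' => he h'.2) l hl⟩
  obtain rfl := (h.isWFS_trivCof_fib.eq_of_le isWFS_pBij_pAny hL fun _ _ _ _ => trivial).2
  have hCW : IsWFS C W := interMP_pAny_left W ▸ h.isWFS_cof_trivFib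
  have hWb := TwoOutOfThree.le_pBij_of_le_pSurj h.twoOutOfThree h.id_mem
    (hCW.right_le_pSurj_of_not_right he)
  obtain ⟨rfl, rfl⟩ := hCW.eq_of_le isWFS_pAny_pBij (fun _ _ _ _ => trivial) hWb
  exact ⟨rfl, rfl, rfl⟩

end IsModelStructure

lemma isModelStructure_iff {C F W : MorphismProperty Pointed.{u}} :
    IsModelStructure C F W ↔ (C = pAny ∧ F = pAny ∧ W = pBij) ∨ (W = pAny ∧ IsWFS C F) := by
  refine ⟨fun h => ?_, ?_⟩
  · by_cases hp : W (toUnit two)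
    · obtain rfl := h.eq_pAny_of_mem_toUnit hp
      exact Or.inr ⟨rfl, interMP_pAny_right F ▸ h.isWFS_cof_trivFib⟩
    · exact Or.inl (h.eq_of_not_mem_toUnit hp)
  · rintro (⟨rfl, rfl, rfl⟩ | ⟨rfl, h⟩)
    · exact ⟨twoOutOfThree_pBij, (interMP_pAny_left _).symm ▸ isWFS_pBij_pAny,
        (interMP_pAny_left _).symm ▸ isWFS_pAny_pBij⟩
    · exact ⟨twoOutOfThree_pAny, (interMP_pAny_right _).symm ▸ h,
        (interMP_pAny_right _).symm ▸ h⟩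

/-- **The seven model structures on the category of pointed sets (Goodwillie).** -/
theorem pointed_model_structure_classification (C F W : MorphismProperty Pointed.{u}) :
    IsModelStructure C F W ↔
      ((C = pAny ∧ F = pAny ∧ W = pBij) ∨
       (C = pAny ∧ F = pBij ∧ W = pAny) ∨
       (C = pBij ∧ F = pAny ∧ W = pAny) ∨
       (C = pInj ∧ F = pSurj ∧ W = pAny) ∨
       (C = pSurj ∧ F = pInj ∧ W = pAny) ∨
       (C = (fun X Y f => pSurj f ∧ pInjNeStar f) ∧ F = pInjStar ∧ W = pAny) ∨
       (C = pInjNeStar ∧ F = (fun X Y f => pSurj f ∧ pInjStar f) ∧ W = pAny)) := by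
  rw [isModelStructure_iff, isWFS_iff]
  tauto
end
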